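/- arXiv:1703.06444 — 5 statements merged into one kernel-verified Lean document; each statement's English description precedes it below -/
import Mathlib

section
/- Let (X, d) be a quasiconvex and complete metric space and let A ⊂ X be a separable subset. Then there is a subset X̃ ⊂ X containing A such that (X̃, d), with the metric induced from X, is separable, quasiconvex, and complete. Moreover, if C_q is a quasiconvexity constant for X, then X̃ is quasiconvex with any quasiconvexity constant larger than C_q. -/
open MeasureTheory Set ENNReal NNReal

noncomputable section

/-- A metric space `X` is quasiconvex with constant `C ≥ 1` if any two points can be joined
by a rectifiable curve of length at most `C` times their distance. -/
def IsQuasiconvexWith (X : Type*) [MetricSpace X] (C : ℝ≥0) : Prop :=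
  ∀ x y : X, ∃ γ : ℝ → X, ContinuousOn γ (Set.Icc 0 1) ∧ γ 0 = x ∧ γ 1 = y ∧
    eVariationOn γ (Set.Icc 0 1) ≤ (C : ℝ≥0∞) * edist x y

/-- A subset `S` of a metric space `X` is quasiconvex with constant `C` if any two points of `S`
can be joined by a rectifiable curve lying in `S` of length at most `C` times their distance. -/
def IsQuasiconvexOn {X : Type*} [MetricSpace X] (C : ℝ≥0) (S : Set X) : Prop :=
  ∀ x ∈ S, ∀ y ∈ S, ∃ γ : ℝ → X, ContinuousOn γ (Set.Icc 0 1) ∧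
    Set.MapsTo γ (Set.Icc 0 1) S ∧ γ 0 = x ∧ γ 1 = y ∧
    eVariationOn γ (Set.Icc 0 1) ≤ (C : ℝ≥0∞) * edist x y


/-! Take a countable dense subset of `A` and close it up, countably often, under adding a countable
dense subset of the image of a `C_q`-quasiconvex curve between any two of its points. The closure
`X̃` of the resulting countable set `D` is separable and complete, and any two points of `D` are
joined inside `X̃` by a curve of length at most `C_q d`.

A point `x ∈ X̃` is the limit of points `p k ∈ D` with `∑ d(x, p k)` as small as we like.
Concatenating the curves from `p (k + 1)` to `p k` on the intervals `[2⁻ᵏ⁻¹, 2⁻ᵏ]` gives a curve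
in `X̃` from `x` to `p 0` of small length; it is continuous at `0` because the pieces shrink to `x`.
Going `x → p 0 → q 0 → y` then costs `C_q d(x, y)` plus an arbitrarily small error, which fits
under `C d(x, y)` for any `C > C_q`. -/

open Filter Topology

theorem Antitone.eq_of_mem_Ioc_succ {α : Type*} [Preorder α] {c : ℕ → α} (hc : Antitone c)
    {t : α} {j k : ℕ} (hj : t ∈ Ioc (c (j + 1)) (c j)) (hk : t ∈ Ioc (c (k + 1)) (c k)) :
    j = k := by
  by_contra hjk
  exact disjoint_left.1 (hc.pairwise_disjoint_on_Ioc_succ hjk) hj hk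

theorem exists_mem_Ioc_succ_of_tendsto {α : Type*} [LinearOrder α] [TopologicalSpace α]
    [OrderTopology α] {c : ℕ → α} {l t : α} (hc : Tendsto c atTop (𝓝 l))
    (ht : t ∈ Ioc l (c 0)) : ∃ k, t ∈ Ioc (c (k + 1)) (c k) := by
  have hex : ∃ n, c n < t := (hc.eventually (gt_mem_nhds ht.1)).exists
  obtain ⟨k, hk⟩ : ∃ k, Nat.find hex = k + 1 :=
    Nat.exists_eq_add_one.2 (Nat.pos_of_ne_zero fun h => (h ▸ Nat.find_spec hex).not_ge ht.2)
  exact ⟨k, hk ▸ Nat.find_spec hex, not_lt.1 (Nat.find_min hex (by omega))⟩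

theorem Set.Countable.exists_superset_closed {α : Type*} {s : Set α} (hs : s.Countable)
    (T : α → α → Set α) (hT : ∀ a b, (T a b).Countable) :
    ∃ D : Set α, D.Countable ∧ s ⊆ D ∧ ∀ a ∈ D, ∀ b ∈ D, T a b ⊆ D := by
  let E : ℕ → Set α := fun n => Nat.rec s (fun _ E => E ∪ ⋃ a ∈ E, ⋃ b ∈ E, T a b) n
  have hE : Monotone E := monotone_nat_of_le_succ fun _ => subset_union_left
  refine ⟨⋃ n, E n, countable_iUnion fun n => ?_, subset_iUnion E 0, fun a ha b hb => ?_⟩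
  · induction n with
    | zero => exact hs
    | succ n ih => exact ih.union (ih.biUnion fun a _ => ih.biUnion fun b _ => hT a b)
  · obtain ⟨m, hm⟩ := mem_iUnion.1 ha
    obtain ⟨n, hn⟩ := mem_iUnion.1 hb
    refine fun z hz => mem_iUnion.2 ⟨max m n + 1, Or.inr ?_⟩
    exact mem_biUnion (hE (le_max_left m n) hm) (mem_biUnion (hE (le_max_right m n) hn) hz)

section SeqConcat

variable {X : Type*} {c : ℕ → ℝ} {l t : ℝ} {γ : ℕ → ℝ → X} {x : X}

open Classical in
def seqConcat (c : ℕ → ℝ) (γ : ℕ → ℝ → X) (x : X) (t : ℝ) : X :=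
  if h : ∃ k, t ∈ Ioc (c (k + 1)) (c k) then γ h.choose t else x

theorem seqConcat_of_mem_Ioc (hc : Antitone c) {k : ℕ} (ht : t ∈ Ioc (c (k + 1)) (c k)) :
    seqConcat c γ x t = γ k t := by
  have h : ∃ k, t ∈ Ioc (c (k + 1)) (c k) := ⟨k, ht⟩
  rw [seqConcat, dif_pos h, hc.eq_of_mem_Ioc_succ h.choose_spec ht]

theorem seqConcat_limit (hc : Antitone c) (hcl : Tendsto c atTop (𝓝 l)) :
    seqConcat c γ x l = x := by
  rw [seqConcat, dif_neg fun ⟨k, hk⟩ => hk.1.not_ge (hc.le_of_tendsto hcl (k + 1))]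

theorem eqOn_seqConcat (hc : StrictAnti c) (hγ : ∀ k, γ (k + 1) (c (k + 1)) = γ k (c (k + 1)))
    (k : ℕ) : EqOn (seqConcat c γ x) (γ k) (Icc (c (k + 1)) (c k)) := fun t ht => by
  rcases ht.1.eq_or_lt with rfl | hlt
  · rw [seqConcat_of_mem_Ioc hc.antitone ⟨hc (Nat.lt_succ_self _), le_rfl⟩, hγ]
  · exact seqConcat_of_mem_Ioc hc.antitone ⟨hlt, ht.2⟩

end SeqConcat

section Curves

variable {X : Type*} [PseudoEMetricSpace X]

structure IsCurveIn (S : Set X) (γ : ℝ → X) (a b : ℝ) (x y : X) (ℓ : ℝ≥0∞) : Prop where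
  continuousOn : ContinuousOn γ (Icc a b)
  mapsTo : MapsTo γ (Icc a b) S
  left : γ a = x
  right : γ b = y
  eVariationOn_le : eVariationOn γ (Icc a b) ≤ ℓ

namespace IsCurveIn

variable {S : Set X} {γ γ' : ℝ → X} {a b c d t : ℝ} {x y z : X} {ℓ ℓ' : ℝ≥0∞}

theorem const (hx : x ∈ S) (a b : ℝ) : IsCurveIn S (fun _ => x) a b x x 0 where
  continuousOn := continuousOn_const
  mapsTo _ _ := hx
  left := rfl
  right := rfl
  eVariationOn_le := (eVariationOn.constant_on (subsingleton_singleton.anti (image_subset_iff.2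
    fun _ _ => rfl))).le

theorem mono (h : IsCurveIn S γ a b x y ℓ) (hℓ : ℓ ≤ ℓ') : IsCurveIn S γ a b x y ℓ' :=
  { h with eVariationOn_le := h.eVariationOn_le.trans hℓ }

theorem edist_left_le (h : IsCurveIn S γ a b x y ℓ) (ht : t ∈ Icc a b) : edist (γ t) x ≤ ℓ := by
  rw [← h.left]
  exact (eVariationOn.edist_le γ ht (left_mem_Icc.2 (ht.1.trans ht.2))).trans h.eVariationOn_le

theorem rescale (h : IsCurveIn S γ a b x y ℓ) (hab : a < b) (hcd : c < d) :
    IsCurveIn S (fun t => γ ((b - a) / (d - c) * t + (a - (b - a) / (d - c) * c))) c d x y ℓ := by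
  set m := (b - a) / (d - c)
  have hm : 0 < m := div_pos (sub_pos.2 hab) (sub_pos.2 hcd)
  have hmd : m * d + (a - m * c) = b := by
    have : m * (d - c) = b - a := div_mul_cancel₀ _ (sub_ne_zero.2 hcd.ne')
    linear_combination this
  have himage : (fun t => m * t + (a - m * c)) '' Icc c d = Icc a b := by
    rw [image_affine_Icc' hm, hmd, add_sub_cancel]
  have hmaps : MapsTo (fun t => m * t + (a - m * c)) (Icc c d) (Icc a b) :=
    himage ▸ mapsTo_image _ _
  refine ⟨h.continuousOn.comp (by fun_prop) hmaps, h.mapsTo.comp hmaps, ?_, ?_, ?_⟩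
  · simpa [add_sub_cancel] using h.left
  · simpa [hmd] using h.right
  · have hmono : MonotoneOn (fun t => m * t + (a - m * c)) (Icc c d) :=
      fun u _ v _ huv => by dsimp only; gcongr
    have hvar := eVariationOn.comp_eq_of_monotoneOn γ _ hmono
    rw [himage] at hvar
    exact hvar.le.trans h.eVariationOn_le

theorem reverse (h : IsCurveIn S γ a b x y ℓ) : IsCurveIn S (fun t => γ (a + b - t)) a b y x ℓ := by
  have himage : (fun t => a + b - t) '' Icc a b = Icc a b := by
    rw [image_const_sub_Icc]; congr 1 <;> ring
  have hmaps : MapsTo (fun t => a + b - t) (Icc a b) (Icc a b) :=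
    (mapsTo_image _ _).mono_right himage.subset
  refine ⟨h.continuousOn.comp (by fun_prop) hmaps, h.mapsTo.comp hmaps, ?_, ?_, ?_⟩
  · simpa using h.right
  · simpa using h.left
  · have hanti : AntitoneOn (fun t => a + b - t) (Icc a b) :=
      fun u _ v _ huv => by dsimp only; linarith
    have hvar := eVariationOn.comp_eq_of_antitoneOn γ _ hanti
    rw [himage] at hvar
    exact hvar.le.trans h.eVariationOn_le

theorem congr (h : IsCurveIn S γ a b x y ℓ) (hγ : EqOn γ γ' (Icc a b)) (hab : a ≤ b) :
    IsCurveIn S γ' a b x y ℓ where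
  continuousOn := h.continuousOn.congr hγ.symm
  mapsTo := h.mapsTo.congr hγ
  left := hγ (left_mem_Icc.2 hab) ▸ h.left
  right := hγ (right_mem_Icc.2 hab) ▸ h.right
  eVariationOn_le := eVariationOn.eq_of_eqOn hγ ▸ h.eVariationOn_le

theorem union (h : IsCurveIn S γ a b x y ℓ) (h' : IsCurveIn S γ b c y z ℓ') (hab : a ≤ b)
    (hbc : b ≤ c) : IsCurveIn S γ a c x z (ℓ + ℓ') := by
  have hsplit : Icc a c = Icc a b ∪ Icc b c := (Icc_union_Icc_eq_Icc hab hbc).symm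
  refine ⟨?_, ?_, h.left, h'.right, ?_⟩
  · rw [hsplit]
    exact h.continuousOn.union_of_isClosed h'.continuousOn isClosed_Icc isClosed_Icc
  · rw [hsplit]
    exact h.mapsTo.union h'.mapsTo
  · have hvar := eVariationOn.Icc_add_Icc γ hab hbc (mem_univ b)
    simp only [univ_inter] at hvar
    rw [← hvar]
    exact add_le_add h.eVariationOn_le h'.eVariationOn_le

end IsCurveIn

section Concatenation

variable {S : Set X} {c : ℕ → ℝ} {l : ℝ} {γ : ℕ → ℝ → X} {p : ℕ → X} {x : X} {L : ℕ → ℝ≥0∞}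

theorem isCurveIn_seqConcat_Icc (hc : StrictAnti c)
    (hγ : ∀ k, IsCurveIn S (γ k) (c (k + 1)) (c k) (p (k + 1)) (p k) (L k)) (x : X) (n : ℕ) :
    IsCurveIn S (seqConcat c γ x) (c n) (c 0) (p n) (p 0) (∑ k ∈ Finset.range n, L k) := by
  have hmatch : ∀ k, γ (k + 1) (c (k + 1)) = γ k (c (k + 1)) := fun k => by
    rw [(hγ (k + 1)).right, (hγ k).left]
  have hpiece : ∀ k, IsCurveIn S (seqConcat c γ x) (c (k + 1)) (c k) (p (k + 1)) (p k) (L k) :=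
    fun k => (hγ k).congr (eqOn_seqConcat hc hmatch k).symm (hc (Nat.lt_succ_self k)).le
  induction n with
  | zero =>
    have hp0 : p 0 ∈ S := (hγ 0).right ▸ (hγ 0).mapsTo (right_mem_Icc.2 (hc zero_lt_one).le)
    refine (IsCurveIn.const hp0 _ _).congr ?_ le_rfl
    rintro t ⟨h₁, h₂⟩
    rw [le_antisymm h₂ h₁, (hpiece 0).right]
  | succ n ih =>
    rw [Finset.sum_range_succ, add_comm (∑ k ∈ _, _)]
    exact (hpiece n).union ih (hc (Nat.lt_succ_self n)).le (hc.antitone (Nat.zero_le n))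

theorem continuousWithinAt_seqConcat_limit (hc : StrictAnti c) (hcl : Tendsto c atTop (𝓝 l))
    (hγ : ∀ k, IsCurveIn S (γ k) (c (k + 1)) (c k) (p (k + 1)) (p k) (L k))
    (hp : Tendsto p atTop (𝓝 x)) (hL : Tendsto L atTop (𝓝 0)) :
    ContinuousWithinAt (seqConcat c γ x) (Ici l) l := by
  rw [ContinuousWithinAt, seqConcat_limit hc.antitone hcl, EMetric.tendsto_nhds]
  intro ε hε
  have hr : Tendsto (fun k => L k + edist (p (k + 1)) x) atTop (𝓝 0) := by
    simpa using hL.add (tendsto_iff_edist_tendsto_0.1 ((tendsto_add_atTop_iff_nat 1).2 hp))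
  obtain ⟨N, hN⟩ := eventually_atTop.1 (hr.eventually (gt_mem_nhds hε))
  have hlN : l < c N := (hc.antitone.le_of_tendsto hcl (N + 1)).trans_lt (hc (Nat.lt_succ_self N))
  filter_upwards [Ico_mem_nhdsGE hlN] with t ht
  rcases ht.1.eq_or_lt with rfl | hlt
  · simpa [seqConcat_limit hc.antitone hcl] using hε
  obtain ⟨k, hk⟩ := exists_mem_Ioc_succ_of_tendsto hcl ⟨hlt, ht.2.le.trans (hc.antitone N.zero_le)⟩
  have hNk : N ≤ k := by
    by_contra! hkN
    exact (hk.1.trans ht.2).not_ge (hc.antitone hkN)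
  rw [seqConcat_of_mem_Ioc hc.antitone hk]
  calc edist (γ k t) x ≤ edist (γ k t) (p (k + 1)) + edist (p (k + 1)) x := edist_triangle _ _ _
    _ ≤ L k + edist (p (k + 1)) x := add_le_add_left ((hγ k).edist_left_le ⟨hk.1.le, hk.2⟩) _
    _ < ε := hN k hNk

theorem isCurveIn_seqConcat (hc : StrictAnti c) (hcl : Tendsto c atTop (𝓝 l))
    (hγ : ∀ k, IsCurveIn S (γ k) (c (k + 1)) (c k) (p (k + 1)) (p k) (L k)) (hx : x ∈ S)
    (hp : Tendsto p atTop (𝓝 x)) (hL : ∑' k, L k ≠ ∞) :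
    IsCurveIn S (seqConcat c γ x) l (c 0) x (p 0) (∑' k, L k) := by
  have hfin := isCurveIn_seqConcat_Icc hc hγ x
  have hlim := continuousWithinAt_seqConcat_limit hc hcl hγ hp
    (ENNReal.tendsto_atTop_zero_of_tsum_ne_top hL)
  have hbelow : ∀ t ∈ Ioc l (c 0), ∃ n, c n < t := fun t ht =>
    (hcl.eventually (gt_mem_nhds ht.1)).exists
  refine ⟨fun t ht => ?_, fun t ht => ?_, seqConcat_limit hc.antitone hcl, (hfin 0).right, ?_⟩
  · rcases ht.1.eq_or_lt with rfl | hlt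
    · exact hlim.mono Icc_subset_Ici_self
    obtain ⟨n, hn⟩ := hbelow t ⟨hlt, ht.2⟩
    refine ((hfin n).continuousOn t ⟨hn.le, ht.2⟩).mono_of_mem_nhdsWithin ?_
    exact mem_nhdsWithin.2 ⟨Ioi (c n), isOpen_Ioi, hn, fun s hs => ⟨le_of_lt hs.1, hs.2.2⟩⟩
  · rcases ht.1.eq_or_lt with rfl | hlt
    · rwa [seqConcat_limit hc.antitone hcl]
    obtain ⟨n, hn⟩ := hbelow t ⟨hlt, ht.2⟩
    exact (hfin n).mapsTo ⟨hn.le, ht.2⟩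
  · -- by continuity at `l` the endpoint `l` adds no variation, and every compact subinterval of
    -- `(l, c 0]` lies in some `[c n, c 0]`
    rw [← eVariationOn.eVariationOn_Ioc_eq_Icc_of_continuousWithinAt hlim,
      eVariationOn.eq_biSup_inter_Icc]
    refine iSup₂_le fun q hq => ?_
    obtain ⟨n, hn⟩ := hbelow q.1 hq.1
    calc eVariationOn (seqConcat c γ x) (Ioc l (c 0) ∩ Icc q.1 q.2)
        ≤ eVariationOn (seqConcat c γ x) (Icc (c n) (c 0)) :=
          eVariationOn.mono _ fun s hs => ⟨hn.le.trans hs.2.1, hs.1.2⟩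
      _ ≤ ∑ k ∈ Finset.range n, L k := (hfin n).eVariationOn_le
      _ ≤ ∑' k, L k := ENNReal.sum_le_tsum _

end Concatenation

def JoinedByCurveIn (S : Set X) (x y : X) (ℓ : ℝ≥0∞) : Prop :=
  ∃ γ, IsCurveIn S γ 0 1 x y ℓ

theorem joinedByCurveIn_iff {S : Set X} {a b : ℝ} {x y : X} {ℓ : ℝ≥0∞} (hab : a < b) :
    JoinedByCurveIn S x y ℓ ↔ ∃ γ, IsCurveIn S γ a b x y ℓ :=
  ⟨fun ⟨_, h⟩ => ⟨_, h.rescale zero_lt_one hab⟩, fun ⟨_, h⟩ => ⟨_, h.rescale hab zero_lt_one⟩⟩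

namespace JoinedByCurveIn

variable {S D : Set X} {x y z : X} {ℓ ℓ' ε : ℝ≥0∞} {K : ℝ≥0}

theorem refl (hx : x ∈ S) : JoinedByCurveIn S x x 0 :=
  ⟨_, .const hx 0 1⟩

theorem mono (h : JoinedByCurveIn S x y ℓ) (hℓ : ℓ ≤ ℓ') : JoinedByCurveIn S x y ℓ' :=
  let ⟨_, hγ⟩ := h
  ⟨_, hγ.mono hℓ⟩

theorem symm (h : JoinedByCurveIn S x y ℓ) : JoinedByCurveIn S y x ℓ :=
  let ⟨_, hγ⟩ := h
  ⟨_, hγ.reverse⟩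

theorem trans (h : JoinedByCurveIn S x y ℓ) (h' : JoinedByCurveIn S y z ℓ') :
    JoinedByCurveIn S x z (ℓ + ℓ') := by
  obtain ⟨γ, hγ⟩ := h
  obtain ⟨γ', hγ'⟩ := (joinedByCurveIn_iff one_lt_two).1 h'
  refine (joinedByCurveIn_iff zero_lt_two).2 ⟨fun t => if t ≤ 1 then γ t else γ' t, ?_⟩
  refine (hγ.congr (fun t ht => ?_) zero_le_one).union (hγ'.congr (fun t ht => ?_) one_le_two)
    zero_le_one one_le_two
  · simp [ht.2]
  · rcases ht.1.eq_or_lt with rfl | h1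
    · simp [hγ.right, hγ'.left]
    · simp [not_le.2 h1]

theorem of_tendsto {p : ℕ → X} {L : ℕ → ℝ≥0∞} (hx : x ∈ S) (hp : Tendsto p atTop (𝓝 x))
    (hL : ∑' k, L k ≠ ∞) (h : ∀ k, JoinedByCurveIn S (p (k + 1)) (p k) (L k)) :
    JoinedByCurveIn S x (p 0) (∑' k, L k) := by
  have hc : StrictAnti fun k : ℕ => (2⁻¹ : ℝ) ^ k :=
    pow_right_strictAnti₀ (by norm_num) (by norm_num)
  have hpiece (k : ℕ) : ∃ γ, IsCurveIn S γ (2⁻¹ ^ (k + 1)) (2⁻¹ ^ k) (p (k + 1)) (p k) (L k) :=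
    (joinedByCurveIn_iff (hc k.lt_succ_self)).1 (h k)
  choose γ hγ using hpiece
  have hcurve := isCurveIn_seqConcat hc
    (tendsto_pow_atTop_nhds_zero_of_lt_one (by norm_num) (by norm_num)) hγ hx hp hL
  rw [pow_zero] at hcurve
  exact ⟨_, hcurve⟩

theorem exists_near_of_mem_closure
    (hD : ∀ q ∈ D, ∀ q' ∈ D, JoinedByCurveIn S q q' (K * edist q q')) (hxD : x ∈ closure D)
    (hx : x ∈ S) (hε : ε ≠ 0) : ∃ q ∈ D, edist x q < ε ∧ JoinedByCurveIn S x q (2 * K * ε) := by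
  obtain ⟨δ, hδpos, hδε⟩ := ENNReal.exists_pos_sum_of_countable' hε ℕ
  choose q hqD hxq using fun k => EMetric.mem_closure_iff.1 hxD _ (hδpos k)
  have hδfin : ∑' k, δ k ≠ ∞ := (hδε.trans_le le_top).ne
  have hq : Tendsto q atTop (𝓝 x) := by
    refine tendsto_iff_edist_tendsto_0.2 (tendsto_of_tendsto_of_tendsto_of_le_of_le
      tendsto_const_nhds (ENNReal.tendsto_atTop_zero_of_tsum_ne_top hδfin) (fun _ => bot_le)
      fun k => ?_)
    rw [edist_comm]
    exact (hxq k).le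
  have hstep (k : ℕ) : JoinedByCurveIn S (q (k + 1)) (q k) (K * (δ (k + 1) + δ k)) :=
    (hD _ (hqD _) _ (hqD _)).mono <| by
      gcongr
      exact (edist_triangle_left _ _ x).trans (add_le_add (hxq _).le (hxq _).le)
  have hsum : ∑' k, K * (δ (k + 1) + δ k) ≤ 2 * K * ∑' k, δ k := by
    rw [ENNReal.tsum_mul_left, ENNReal.tsum_add]
    calc (K : ℝ≥0∞) * (∑' k, δ (k + 1) + ∑' k, δ k) ≤ K * (∑' k, δ k + ∑' k, δ k) := by
          gcongr _ * (?_ + _)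
          exact ENNReal.tsum_comp_le_tsum_of_injective (add_left_injective 1) δ
      _ = 2 * K * ∑' k, δ k := by ring
  have hsum_fin : ∑' k, K * (δ (k + 1) + δ k) ≠ ∞ :=
    ne_top_of_le_ne_top (ENNReal.mul_ne_top (ENNReal.mul_ne_top ENNReal.ofNat_ne_top
      ENNReal.coe_ne_top) hδfin) hsum
  refine ⟨q 0, hqD 0, (hxq 0).trans_le ((ENNReal.le_tsum 0).trans hδε.le), ?_⟩
  exact (of_tendsto hx hq hsum_fin hstep).mono (hsum.trans (by gcongr))

theorem of_mem_closure
    (hD : ∀ q ∈ D, ∀ q' ∈ D, JoinedByCurveIn S q q' (K * edist q q')) (hDS : closure D ⊆ S)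
    (hx : x ∈ closure D) (hy : y ∈ closure D) (hε : ε ≠ 0) :
    JoinedByCurveIn S x y (K * edist x y + ε) := by
  set η := ε / (6 * K)
  have hη : η ≠ 0 := (ENNReal.div_pos hε (ENNReal.mul_ne_top (by simp) (by simp))).ne'
  obtain ⟨q, hqD, hxq, hjoin⟩ := exists_near_of_mem_closure hD hx (hDS hx) hη
  obtain ⟨q', hq'D, hyq', hjoin'⟩ := exists_near_of_mem_closure hD hy (hDS hy) hη
  have hqq' : edist q q' ≤ edist x y + 2 * η :=
    calc edist q q' ≤ edist q x + edist x y + edist y q' := edist_triangle4 _ _ _ _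
      _ ≤ η + edist x y + η := by rw [edist_comm q]; gcongr
      _ = edist x y + 2 * η := by ring
  have hmid : JoinedByCurveIn S q q' (K * (edist x y + 2 * η)) :=
    (hD q hqD q' hq'D).mono (by gcongr)
  refine ((hjoin.trans hmid).trans hjoin'.symm).mono ?_
  calc 2 * K * η + K * (edist x y + 2 * η) + 2 * K * η = K * edist x y + 6 * K * η := by ring
    _ ≤ K * edist x y + ε := add_le_add_right ENNReal.mul_div_le _

end JoinedByCurveIn

end Curves

theorem isQuasiconvexOn_closure {X : Type*} [MetricSpace X] {D : Set X} {K C : ℝ≥0}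
    (hD : ∀ q ∈ D, ∀ q' ∈ D, JoinedByCurveIn (closure D) q q' (K * edist q q')) (hKC : K < C) :
    IsQuasiconvexOn C (closure D) := by
  intro x hx y hy
  suffices JoinedByCurveIn (closure D) x y (C * edist x y) from
    let ⟨γ, hγ⟩ := this
    ⟨γ, hγ.continuousOn, hγ.mapsTo, hγ.left, hγ.right, hγ.eVariationOn_le⟩
  rcases eq_or_ne x y with rfl | hxy
  · exact (JoinedByCurveIn.refl hx).mono bot_le
  have hKC' : (K : ℝ≥0∞) < C := mod_cast hKC
  have hε : ((C : ℝ≥0∞) - K) * edist x y ≠ 0 :=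
    mul_ne_zero (tsub_pos_of_lt hKC').ne' (edist_pos.2 hxy).ne'
  have h := JoinedByCurveIn.of_mem_closure hD subset_rfl hx hy hε
  rwa [← add_mul, add_tsub_cancel_of_le hKC'.le] at h

theorem exists_separable_quasiconvex_complete_superset_general
    {X : Type*} [MetricSpace X] [CompleteSpace X]
    (Cq : ℝ≥0) (hX : IsQuasiconvexWith X Cq)
    (A : Set X) (hA : TopologicalSpace.IsSeparable A) :
    ∃ Xt : Set X, A ⊆ Xt ∧ TopologicalSpace.IsSeparable Xt ∧ IsComplete Xt ∧
      (∃ C : ℝ≥0, 1 ≤ C ∧ IsQuasiconvexOn C Xt) ∧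
      ∀ C : ℝ≥0, Cq < C → IsQuasiconvexOn C Xt := by
  choose Γ hΓ using hX
  choose T hTc hΓT using fun p q =>
    (isCompact_Icc.image_of_continuousOn (hΓ p q).1).isSeparable
  obtain ⟨A₀, hA₀c, hAA₀⟩ := hA
  obtain ⟨D, hDc, hA₀D, hDT⟩ := hA₀c.exists_superset_closed T hTc
  have hjoin : ∀ p ∈ D, ∀ q ∈ D, JoinedByCurveIn (closure D) p q (Cq * edist p q) :=
    fun p hp q hq => ⟨Γ p q, (hΓ p q).1,
      fun t ht => closure_mono (hDT p hp q hq) (hΓT p q (mem_image_of_mem _ ht)),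
      (hΓ p q).2.1, (hΓ p q).2.2.1, (hΓ p q).2.2.2⟩
  have hqc : ∀ C : ℝ≥0, Cq < C → IsQuasiconvexOn C (closure D) :=
    fun C hC => isQuasiconvexOn_closure hjoin hC
  exact ⟨closure D, hAA₀.trans (closure_mono hA₀D), hDc.isSeparable.closure,
    isClosed_closure.isComplete, ⟨Cq + 1, le_add_self, hqc _ (lt_add_one Cq)⟩, hqc⟩

/-- **Lemma 2.1.** If `X` is a quasiconvex complete metric space and `A ⊆ X` is separable, then
there is a subset `X̃ ⊆ X` containing `A` which is separable, quasiconvex and complete (with the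
induced metric); moreover `X̃` is quasiconvex with any quasiconvexity constant larger than the
quasiconvexity constant `C_q` of `X`. -/
theorem exists_separable_quasiconvex_complete_superset
    {X : Type*} [MetricSpace X] [CompleteSpace X]
    (Cq : ℝ≥0) (hCq : 1 ≤ Cq) (hX : IsQuasiconvexWith X Cq)
    (A : Set X) (hA : TopologicalSpace.IsSeparable A) :
    ∃ Xt : Set X, A ⊆ Xt ∧ TopologicalSpace.IsSeparable Xt ∧ IsComplete Xt ∧
      (∃ C : ℝ≥0, 1 ≤ C ∧ IsQuasiconvexOn C Xt) ∧
      ∀ C : ℝ≥0, Cq < C → IsQuasiconvexOn C Xt :=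
  exists_separable_quasiconvex_complete_superset_general Cq hX A hA
end
end

section
/- Let E ⊂ Q be a measurable subset of a cube Q ⊂ ℝ^n. Then there is a constant C = C(n) > 0, depending only on n, such that for any x ∈ Q, ℋ^n({y ∈ Q : ℋ^1(\overline{xy} ∩ E) ≤ C ℋ^n(E)^{1/n}}) > ℋ^n(Q)/2, where \overline{xy} denotes the straight line segment from x to y. -/
/-! The segment `[x, y]` is the image of `[0, 1]` under the `dist x y`-Lipschitz map
`t ↦ lineMap x y t`, so for `x, y` in a cube `Q` of side `d` (sup norm) we get
`ℋ¹([x, y] ∩ E) ≤ d · |{t ∈ [0, 1] : lineMap x y t ∈ E}|`. By Fubini, the integral of the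
right-hand side over `y ∈ Q` is `d ∫₀¹ |Q ∩ h_t⁻¹(E)| dt` with `h_t` the homothety of ratio `t`
about `x`, and the integrand is at most both `|Q| = dⁿ` and `t⁻ⁿ |E|`. Splitting at
`t₀ = |E|^{1/n} / d` bounds the integral by `2 dⁿ |E|^{1/n}` when `n ≥ 2`, so by Markov's
inequality the segment bound exceeds `8 |E|^{1/n}` on at most a quarter of `Q`. When `n ≤ 1`,
`ℋ¹([x, y] ∩ E) ≤ |E|^{1/n}` holds for every `y` (for `n = 0` the exponent `1/0` is `0`). -/

open MeasureTheory Set ENNReal NNReal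

noncomputable section

/-- A (nondegenerate) cube in `ℝⁿ` with edges parallel to the coordinate axes. -/
def IsCube {n : ℕ} (Q : Set (Fin n → ℝ)) : Prop :=
  ∃ (a : Fin n → ℝ) (d : ℝ), 0 < d ∧ Q = Set.Icc a (fun i => a i + d)

open AffineMap Module Metric

section Markov

variable {α : Type*} [MeasurableSpace α] {μ : Measure α}

theorem measure_mul_lt_le_of_lintegral_le {f : α → ℝ≥0∞} (hf : AEMeasurable f μ)
    {s a K : ℝ≥0∞} (hK : K ≠ 0) (hK' : K ≠ ⊤) (h : ∫⁻ x, f x ∂μ ≤ a * s) :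
    μ {x | K * s < f x} ≤ a / K := by
  rcases eq_or_ne s 0 with rfl | hs0
  · have hf0 : f =ᵐ[μ] 0 := (lintegral_eq_zero_iff' hf).1 (by simpa using h)
    refine le_of_eq_of_le (measure_mono_null (fun x hx => ?_) (ae_iff.1 hf0)) zero_le
    simpa [pos_iff_ne_zero] using hx
  rcases eq_or_ne s ⊤ with rfl | hs
  · simp [ENNReal.mul_top hK]
  calc μ {x | K * s < f x} ≤ μ {x | K * s ≤ f x} :=
        measure_mono <| ofPred_subset_ofPred.2 fun _ => le_of_lt
    _ ≤ (∫⁻ x, f x ∂μ) / (K * s) :=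
      meas_ge_le_lintegral_div hf (mul_ne_zero hK hs0) (ENNReal.mul_ne_top hK' hs)
    _ ≤ a * s / (K * s) := by gcongr
    _ = a / K := ENNReal.mul_div_mul_right a K hs0 hs

theorem half_lt_measure_of_measure_sdiff_le {Q G : Set α} (hQ0 : μ Q ≠ 0) (hQ : μ Q ≠ ⊤)
    (h : μ (Q \ G) ≤ μ Q / 4) : μ Q / 2 < μ G := by
  by_contra! hG
  have hle : μ Q ≤ μ Q / 2 + μ Q / 4 :=
    (measure_le_inter_add_sdiff μ Q G).trans
      (add_le_add ((measure_mono inter_subset_right).trans hG) h)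
  lift μ Q to ℝ≥0 using hQ with V
  have hV : 0 < (V : ℝ) := by simpa [pos_iff_ne_zero] using hQ0
  have := ENNReal.toReal_mono (by finiteness) hle
  rw [ENNReal.toReal_add (by finiteness) (by finiteness)] at this
  simp only [ENNReal.toReal_div, coe_toReal, ENNReal.toReal_ofNat] at this
  linarith

end Markov

theorem lintegral_Ioi_rpow_neg {r c : ℝ} (hr : 1 < r) (hc : 0 < c) :
    ∫⁻ t in Ioi c, ENNReal.ofReal (t ^ (-r)) = ENNReal.ofReal (c ^ (1 - r) / (r - 1)) := by
  have hr' : -r < -1 := by linarith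
  rw [← ofReal_integral_eq_lintegral_ofReal (integrableOn_Ioi_rpow_of_lt hr' hc)
    ((ae_restrict_mem measurableSet_Ioi).mono fun t ht => Real.rpow_nonneg (hc.trans ht).le _),
    integral_Ioi_rpow_of_lt hr' hc, neg_add_eq_sub, neg_div, ← div_neg, neg_sub]

theorem setLIntegral_Icc_zero_one_le_of_le_rpow_neg {r d u : ℝ} (hr : 1 < r) (hd : 0 < d)
    (hu : 0 ≤ u) (hud : u ≤ d) {g : ℝ → ℝ≥0∞} (hg_le : ∀ t, g t ≤ ENNReal.ofReal (d ^ r))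
    (hg_le_rpow : ∀ t, 0 < t → g t ≤ ENNReal.ofReal (u ^ r) * ENNReal.ofReal (t ^ (-r))) :
    ∫⁻ t in Icc 0 1, g t ≤ ENNReal.ofReal (r / (r - 1) * d ^ (r - 1) * u) := by
  rcases hu.eq_or_lt with rfl | hu
  · refine le_of_eq_of_le ?_ zero_le
    rw [← setLIntegral_congr Ioc_ae_eq_Icc, ← nonpos_iff_eq_zero]
    refine (setLIntegral_mono' measurableSet_Ioc fun t ht => hg_le_rpow t ht.1).trans ?_
    simp [Real.zero_rpow (by linarith : r ≠ 0)]
  set t₀ := u / d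
  have ht₀ : 0 < t₀ := div_pos hu hd
  rw [← Icc_union_Ioc_eq_Icc ht₀.le ((div_le_one hd).2 hud)]
  have hsmall : ∫⁻ t in Icc 0 t₀, g t ≤ ENNReal.ofReal (d ^ r * t₀) := by
    calc ∫⁻ t in Icc 0 t₀, g t ≤ ∫⁻ _ in Icc 0 t₀, ENNReal.ofReal (d ^ r) :=
          lintegral_mono fun t => hg_le t
      _ = ENNReal.ofReal (d ^ r * t₀) := by
          rw [setLIntegral_const, Real.volume_Icc, sub_zero, ← ENNReal.ofReal_mul (by positivity)]
  have hlarge : ∫⁻ t in Ioc t₀ 1, g t ≤ ENNReal.ofReal (u ^ r * (t₀ ^ (1 - r) / (r - 1))) := by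
    calc ∫⁻ t in Ioc t₀ 1, g t
        ≤ ∫⁻ t in Ioc t₀ 1, ENNReal.ofReal (u ^ r) * ENNReal.ofReal (t ^ (-r)) :=
          setLIntegral_mono' measurableSet_Ioc fun t ht => hg_le_rpow t (ht₀.trans ht.1)
      _ ≤ ∫⁻ t in Ioi t₀, ENNReal.ofReal (u ^ r) * ENNReal.ofReal (t ^ (-r)) :=
          lintegral_mono_set Ioc_subset_Ioi_self
      _ = ENNReal.ofReal (u ^ r * (t₀ ^ (1 - r) / (r - 1))) := by
          rw [lintegral_const_mul' _ _ ENNReal.ofReal_ne_top, lintegral_Ioi_rpow_neg hr ht₀,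
            ← ENNReal.ofReal_mul (by positivity)]
  have hsum : d ^ r * t₀ + u ^ r * (t₀ ^ (1 - r) / (r - 1)) = r / (r - 1) * d ^ (r - 1) * u := by
    have hr' : r - 1 ≠ 0 := by linarith
    have hur : u ^ r ≠ 0 := (Real.rpow_pos_of_pos hu r).ne'
    have hdr : d ^ r ≠ 0 := (Real.rpow_pos_of_pos hd r).ne'
    rw [Real.div_rpow hu.le hd.le, Real.rpow_sub hu, Real.rpow_sub hd, Real.rpow_sub_one hd.ne',
      Real.rpow_one, Real.rpow_one]
    field_simp
    linear_combination (r - 1) * div_mul_cancel₀ u hd.ne'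
  calc ∫⁻ t in Icc 0 t₀ ∪ Ioc t₀ 1, g t
      ≤ (∫⁻ t in Icc 0 t₀, g t) + ∫⁻ t in Ioc t₀ 1, g t := lintegral_union_le _ _ _
    _ ≤ ENNReal.ofReal (d ^ r * t₀) + ENNReal.ofReal (u ^ r * (t₀ ^ (1 - r) / (r - 1))) :=
        add_le_add hsmall hlarge
    _ = ENNReal.ofReal (r / (r - 1) * d ^ (r - 1) * u) := by
        have hr' : 0 ≤ r - 1 := by linarith
        rw [← ENNReal.ofReal_add (by positivity) (by positivity), hsum]

section Segment

variable {E : Type*} [NormedAddCommGroup E] [NormedSpace ℝ E] [MeasurableSpace E] [BorelSpace E]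

theorem hausdorffMeasure_segment_inter_le (x y : E) (s : Set E) :
    μH[1] (segment ℝ x y ∩ s) ≤ nndist x y * volume (lineMap x y ⁻¹' s ∩ Icc (0 : ℝ) 1) := by
  have himage : segment ℝ x y ∩ s = lineMap x y '' (lineMap x y ⁻¹' s ∩ Icc (0 : ℝ) 1) := by
    rw [segment_eq_image_lineMap, ← image_inter_preimage, inter_comm]
  rw [himage, ← hausdorffMeasure_real]
  simpa using (lipschitzWith_lineMap (𝕜 := ℝ) x y).hausdorffMeasure_image_le zero_le_one
    (lineMap x y ⁻¹' s ∩ Icc (0 : ℝ) 1)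

theorem measurable_lineMap_uncurry (x : E) : Measurable fun p : E × ℝ => lineMap x p.1 p.2 := by
  simp only [lineMap_apply_module']
  fun_prop

theorem measurable_volume_lineMap_preimage (x : E) {s : Set E} (hs : MeasurableSet s) :
    Measurable fun y => volume (lineMap x y ⁻¹' s ∩ Icc (0 : ℝ) 1) := by
  convert measurable_measure_prodMk_left (ν := volume.restrict (Icc (0 : ℝ) 1))
    (measurable_lineMap_uncurry x hs) using 1
  funext y
  exact (Measure.restrict_apply
    ((measurable_lineMap_uncurry x).comp measurable_prodMk_left hs)).symm

theorem lintegral_volume_lineMap_preimage (μ : Measure E) [SFinite μ] (x : E) {s : Set E}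
    (hs : MeasurableSet s) (Q : Set E) :
    ∫⁻ y in Q, volume (lineMap x y ⁻¹' s ∩ Icc (0 : ℝ) 1) ∂μ =
      ∫⁻ t in Icc (0 : ℝ) 1, μ (homothety x t ⁻¹' s ∩ Q) := by
  have hmeas := measurable_lineMap_uncurry x
  have hind : Measurable (Function.uncurry fun (y : E) (t : ℝ) =>
      s.indicator (1 : E → ℝ≥0∞) (lineMap x y t)) :=
    (measurable_one.indicator hs).comp hmeas
  calc ∫⁻ y in Q, volume (lineMap x y ⁻¹' s ∩ Icc (0 : ℝ) 1) ∂μ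
      = ∫⁻ y in Q, (∫⁻ t in Icc (0 : ℝ) 1, s.indicator (1 : E → ℝ≥0∞) (lineMap x y t)) ∂μ := by
        refine lintegral_congr fun y => ?_
        have hy : MeasurableSet (lineMap x y ⁻¹' s) := (hmeas.comp measurable_prodMk_left) hs
        rw [← Measure.restrict_apply hy, ← lintegral_indicator_one hy]
        rfl
    _ = ∫⁻ t in Icc (0 : ℝ) 1, ∫⁻ y in Q, s.indicator (1 : E → ℝ≥0∞) (lineMap x y t) ∂μ :=
        lintegral_lintegral_swap hind.aemeasurable
    _ = ∫⁻ t in Icc (0 : ℝ) 1, μ (homothety x t ⁻¹' s ∩ Q) := by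
        refine lintegral_congr fun t => ?_
        have ht : MeasurableSet (homothety x t ⁻¹' s) :=
          (hmeas.comp measurable_prodMk_right) hs
        rw [← Measure.restrict_apply ht, ← lintegral_indicator_one ht]
        rfl

theorem addHaar_preimage_homothety [FiniteDimensional ℝ E] (μ : Measure E) [μ.IsAddHaarMeasure]
    (x : E) {t : ℝ} (ht : t ≠ 0) (s : Set E) :
    μ (homothety x t ⁻¹' s) = ENNReal.ofReal |(t ^ finrank ℝ E)⁻¹| * μ s := by
  have hinv : homothety x t ⁻¹' s = homothety x t⁻¹ '' s := by
    refine (congrFun (image_eq_preimage_of_inverse (fun y => ?_) (fun y => ?_)) s).symm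
    · rw [← homothety_mul_apply, mul_inv_cancel₀ ht, homothety_one, AffineMap.id_apply]
    · rw [← homothety_mul_apply, inv_mul_cancel₀ ht, homothety_one, AffineMap.id_apply]
  rw [hinv, Measure.addHaar_image_homothety, inv_pow]

theorem lintegral_mul_volume_lineMap_preimage_le [FiniteDimensional ℝ E] (μ : Measure E)
    [μ.IsAddHaarMeasure] (hn : 2 ≤ finrank ℝ E) (x : E) {Q s : Set E} {d : ℝ} (hd : 0 < d)
    (hQ : μ Q ≤ ENNReal.ofReal (d ^ finrank ℝ E)) (hs : MeasurableSet s) (hsQ : s ⊆ Q) :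
    ∫⁻ y in Q, ENNReal.ofReal d * volume (lineMap x y ⁻¹' s ∩ Icc (0 : ℝ) 1) ∂μ
      ≤ 2 * ENNReal.ofReal (d ^ finrank ℝ E) * μ s ^ (finrank ℝ E : ℝ)⁻¹ := by
  set n := finrank ℝ E
  have hn0 : n ≠ 0 := by omega
  have hn2 : (2 : ℝ) ≤ n := by exact_mod_cast hn
  have hμs : μ s ≠ ⊤ := ((measure_mono hsQ).trans_lt (hQ.trans_lt ENNReal.ofReal_lt_top)).ne
  set e := (μ s).toReal
  have he : 0 ≤ e := ENNReal.toReal_nonneg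
  have hed : e ≤ d ^ n :=
    ENNReal.toReal_le_of_le_ofReal (by positivity) ((measure_mono hsQ).trans hQ)
  set u := e ^ (n : ℝ)⁻¹
  have hue : u ^ (n : ℝ) = e := by rw [Real.rpow_natCast, Real.rpow_inv_natCast_pow he hn0]
  have hud : u ≤ d := by
    calc u ≤ (d ^ n) ^ (n : ℝ)⁻¹ := Real.rpow_le_rpow he hed (by positivity)
      _ = d := Real.pow_rpow_inv_natCast hd.le hn0
  have hint : ∫⁻ y in Q, volume (lineMap x y ⁻¹' s ∩ Icc (0 : ℝ) 1) ∂μ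
      ≤ ENNReal.ofReal (n / (n - 1) * d ^ ((n : ℝ) - 1) * u) := by
    rw [lintegral_volume_lineMap_preimage μ x hs Q]
    refine setLIntegral_Icc_zero_one_le_of_le_rpow_neg (by linarith) hd (by positivity) hud
      (fun t => ?_) (fun t ht => ?_)
    · rw [Real.rpow_natCast]
      exact (measure_mono inter_subset_right).trans hQ
    · calc μ (homothety x t ⁻¹' s ∩ Q) ≤ μ (homothety x t ⁻¹' s) :=
            measure_mono inter_subset_left
        _ = ENNReal.ofReal (u ^ (n : ℝ)) * ENNReal.ofReal (t ^ (-(n : ℝ))) := by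
          rw [addHaar_preimage_homothety μ x ht.ne', hue, ENNReal.ofReal_toReal hμs, mul_comm,
            abs_of_pos (by positivity), Real.rpow_neg ht.le, Real.rpow_natCast]
  calc ∫⁻ y in Q, ENNReal.ofReal d * volume (lineMap x y ⁻¹' s ∩ Icc (0 : ℝ) 1) ∂μ
      = ENNReal.ofReal d * ∫⁻ y in Q, volume (lineMap x y ⁻¹' s ∩ Icc (0 : ℝ) 1) ∂μ :=
        lintegral_const_mul _ (measurable_volume_lineMap_preimage x hs)
    _ ≤ ENNReal.ofReal d * ENNReal.ofReal (n / (n - 1) * d ^ ((n : ℝ) - 1) * u) := by gcongr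
    _ ≤ ENNReal.ofReal (2 * d ^ n * u) := by
        rw [← ENNReal.ofReal_mul hd.le]
        refine ENNReal.ofReal_le_ofReal ?_
        have hq : (n : ℝ) / (n - 1) ≤ 2 := by rw [div_le_iff₀ (by linarith)]; linarith
        calc d * (n / (n - 1) * d ^ ((n : ℝ) - 1) * u) = n / (n - 1) * (d ^ n * u) := by
              rw [Real.rpow_sub_one hd.ne', Real.rpow_natCast]
              field_simp
          _ ≤ 2 * d ^ n * u := by rw [mul_assoc]; gcongr
    _ = 2 * ENNReal.ofReal (d ^ n) * μ s ^ (n : ℝ)⁻¹ := by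
        rw [ENNReal.ofReal_mul (by positivity), ENNReal.ofReal_mul (by norm_num),
          ENNReal.ofReal_ofNat, ← ENNReal.ofReal_toReal hμs,
          ENNReal.ofReal_rpow_of_nonneg he (by positivity)]

theorem measure_setOf_lt_hausdorffMeasure_segment_inter_le [FiniteDimensional ℝ E]
    (μ : Measure E) [μ.IsAddHaarMeasure] (hn : 2 ≤ finrank ℝ E) {x : E} {Q s : Set E} {d : ℝ}
    (hd : 0 < d) (hQ : μ Q ≤ ENNReal.ofReal (d ^ finrank ℝ E)) (hQx : Q ⊆ closedBall x d)
    (hs : MeasurableSet s) (hsQ : s ⊆ Q) :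
    μ {y | y ∈ Q ∧ ENNReal.ofReal 8 * μ s ^ (finrank ℝ E : ℝ)⁻¹ < μH[1] (segment ℝ x y ∩ s)}
      ≤ ENNReal.ofReal (d ^ finrank ℝ E) / 4 := by
  set n := finrank ℝ E
  set m : E → ℝ≥0∞ := fun y => volume (lineMap x y ⁻¹' s ∩ Icc (0 : ℝ) 1)
  have hsegment : ∀ y ∈ Q, μH[1] (segment ℝ x y ∩ s) ≤ ENNReal.ofReal d * m y := by
    intro y hy
    refine (hausdorffMeasure_segment_inter_le x y s).trans (mul_le_mul_left ?_ _)
    rw [← ENNReal.ofReal_coe_nnreal, coe_nndist, dist_comm]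
    exact ENNReal.ofReal_le_ofReal (hQx hy)
  calc μ {y | y ∈ Q ∧ ENNReal.ofReal 8 * μ s ^ (n : ℝ)⁻¹ < μH[1] (segment ℝ x y ∩ s)}
      ≤ μ.restrict Q {y | ENNReal.ofReal 8 * μ s ^ (n : ℝ)⁻¹ < ENNReal.ofReal d * m y} := by
        refine (measure_mono ?_).trans (Measure.le_restrict_apply _ _)
        rintro y ⟨hyQ, hy⟩
        exact ⟨hy.trans_le (hsegment y hyQ), hyQ⟩
    _ ≤ 2 * ENNReal.ofReal (d ^ n) / ENNReal.ofReal 8 :=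
        measure_mul_lt_le_of_lintegral_le
          ((measurable_volume_lineMap_preimage x hs).const_mul _).aemeasurable (by simp)
          ENNReal.ofReal_ne_top (lintegral_mul_volume_lineMap_preimage_le μ hn x hd hQ hs hsQ)
    _ = ENNReal.ofReal (d ^ n) / 4 := by
        rw [ENNReal.ofReal_ofNat, show (8 : ℝ≥0∞) = 2 * 4 by norm_num,
          ENNReal.mul_div_mul_left _ _ two_ne_zero ENNReal.ofNat_ne_top]

end Segment

section Cube

variable {ι : Type*} [Fintype ι]

theorem volume_Icc_add_const (a : ι → ℝ) {d : ℝ} (hd : 0 ≤ d) :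
    volume (Icc a fun i => a i + d) = ENNReal.ofReal (d ^ Fintype.card ι) := by
  simp [Real.volume_Icc_pi, ENNReal.ofReal_pow hd]

theorem Icc_add_const_subset_closedBall {a x : ι → ℝ} {d : ℝ} (hd : 0 ≤ d)
    (hx : x ∈ Icc a fun i => a i + d) : (Icc a fun i => a i + d) ⊆ closedBall x d :=
  fun y hy => (Real.dist_le_of_mem_pi_Icc hy hx).trans <|
    (dist_pi_le_iff hd).2 fun i => by simp [abs_of_nonneg hd]

end Cube

theorem hausdorffMeasure_segment_inter_le_volume_rpow {n : ℕ} (hn : n ≤ 1) (x y : Fin n → ℝ)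
    (s : Set (Fin n → ℝ)) : μH[1] (segment ℝ x y ∩ s) ≤ volume s ^ (n : ℝ)⁻¹ := by
  interval_cases n
  · refine (hausdorffMeasure_segment_inter_le x y s).trans ?_
    simp [Subsingleton.elim x y]
  · rw [Nat.cast_one, inv_one, ENNReal.rpow_one]
    refine (measure_mono inter_subset_right).trans_eq ?_
    simpa using congrFun (congrArg (⇑) (hausdorffMeasure_pi_real (ι := Fin 1))) s

theorem segment_intersection_lemma_general (n : ℕ) :
    ∃ C : ℝ, 0 < C ∧ ∀ Q E : Set (Fin n → ℝ), IsCube Q → E ⊆ Q → MeasurableSet E →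
      ∀ x ∈ Q,
        μH[(n : ℝ)] Q / 2 <
          μH[(n : ℝ)] {y | y ∈ Q ∧
            μH[(1 : ℝ)] (segment ℝ x y ∩ E) ≤
              ENNReal.ofReal C * (μH[(n : ℝ)] E) ^ ((1 : ℝ) / n)} := by
  refine ⟨8, by norm_num, ?_⟩
  rintro Q E ⟨a, d, hd, rfl⟩ hEQ hE x hx
  have hμH : (μH[(n : ℝ)] : Measure (Fin n → ℝ)) = volume := by
    simpa using hausdorffMeasure_pi_real (ι := Fin n)
  have hvol := volume_Icc_add_const a hd.le
  rw [Fintype.card_fin] at hvol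
  rw [hμH, one_div]
  refine half_lt_measure_of_measure_sdiff_le (by simp [hvol, hd]) (by simp [hvol]) ?_
  rcases le_or_gt n 1 with hn | hn
  · refine le_of_eq_of_le (measure_mono_null (fun y hy => ?_) measure_empty) zero_le
    refine hy.2 ⟨hy.1, (hausdorffMeasure_segment_inter_le_volume_rpow hn x y E).trans ?_⟩
    exact le_mul_of_one_le_left zero_le (by simp)
  · have hbad := measure_setOf_lt_hausdorffMeasure_segment_inter_le volume
      (by rwa [Module.finrank_fin_fun]) hd (by simpa using hvol.le)
      (Icc_add_const_subset_closedBall hd.le hx) hE hEQ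
    rw [Module.finrank_fin_fun] at hbad
    rw [hvol]
    refine (measure_mono ?_).trans hbad
    rintro y ⟨hyQ, hyG⟩
    exact ⟨hyQ, not_le.1 fun h => hyG ⟨hyQ, h⟩⟩

/-- **Lemma 3.2 (Lemma 4.4 of [HM1]).** There is a constant `C = C(n) > 0` such that for any
cube `Q ⊆ ℝⁿ`, any measurable `E ⊆ Q` and any `x ∈ Q`, the set of `y ∈ Q` for which the segment
`\overline{xy}` meets `E` in a set of `ℋ¹`-measure at most `C ℋⁿ(E)^{1/n}` has `ℋⁿ`-measure
greater than `ℋⁿ(Q)/2`. -/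
theorem segment_intersection_lemma (n : ℕ) (hn : 0 < n) :
    ∃ C : ℝ, 0 < C ∧ ∀ Q E : Set (Fin n → ℝ), IsCube Q → E ⊆ Q → MeasurableSet E →
      ∀ x ∈ Q,
        μH[(n : ℝ)] Q / 2 <
          μH[(n : ℝ)] {y | y ∈ Q ∧
            μH[(1 : ℝ)] (segment ℝ x y ∩ E) ≤
              ENNReal.ofReal C * (μH[(n : ℝ)] E) ^ ((1 : ℝ) / n)} :=
  segment_intersection_lemma_general n
end
end

section
/- If η = (η_1, η_2, …) : [a,b] → ℓ∞ is a Lipschitz curve, then each component η_i : [a,b] → ℝ is differentiable almost everywhere, and the length of η satisfies ℓ(η) ≤ ∫_a^b ‖η'(t)‖_∞ dt, where ‖η'(t)‖_∞ = sup_i |η_i'(t)|. -/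
/-!
Each coordinate `ηᵢ` is Lipschitz, hence absolutely continuous, so the fundamental theorem of
calculus gives `|ηᵢ(y) - ηᵢ(x)| ≤ ∫_x^y |ηᵢ'|`. Taking the supremum over `i` bounds
`‖η(y) - η(x)‖_∞` by the mass of `(x, y]` under the measure with density `supᵢ |ηᵢ'|`, and
additivity of this measure over consecutive intervals of a partition bounds the length.
-/

open MeasureTheory Set ENNReal NNReal

noncomputable section

/-- `ℓ∞`: the Banach space of bounded real sequences with the supremum norm. -/
abbrev lInfty : Type := lp (fun _ : ℕ => ℝ) ⊤

theorem eVariationOn_le_measure_of_edist_le {α E : Type*} [LinearOrder α] [TopologicalSpace α]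
    [OrderClosedTopology α] [MeasurableSpace α] [OpensMeasurableSpace α] [PseudoEMetricSpace E]
    {f : α → E} {s : Set α} (hs : s.OrdConnected) (μ : Measure α)
    (h : ∀ x ∈ s, ∀ y ∈ s, x ≤ y → edist (f x) (f y) ≤ μ (Ioc x y)) :
    eVariationOn f s ≤ μ s := by
  refine iSup_le fun ⟨n, u, hu, us⟩ => ?_
  have partial_sum_le : ∀ m, ∑ k ∈ Finset.range m, edist (f (u (k + 1))) (f (u k)) ≤
      μ (Ioc (u 0) (u m)) := by
    intro m
    induction m with
    | zero => simp
    | succ m ih =>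
      rw [Finset.sum_range_succ, edist_comm, ← Ioc_union_Ioc_eq_Ioc (hu m.zero_le) (hu m.le_succ),
        measure_union (Ioc_disjoint_Ioc_of_le le_rfl) measurableSet_Ioc]
      exact add_le_add ih (h _ (us m) _ (us (m + 1)) (hu m.le_succ))
  exact (partial_sum_le n).trans <| measure_mono <|
    Ioc_subset_Icc_self.trans (hs.out (us 0) (us n))

theorem AbsolutelyContinuousOnInterval.enorm_sub_le_lintegral_deriv {f : ℝ → ℝ} {a b : ℝ}
    (hf : AbsolutelyContinuousOnInterval f a b) (hab : a ≤ b) :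
    ‖f b - f a‖ₑ ≤ ∫⁻ t in Ioc a b, ‖deriv f t‖ₑ := by
  rw [← hf.integral_deriv_eq_sub, intervalIntegral.integral_of_le hab]
  exact enorm_integral_le_lintegral_enorm _

theorem lp.edist_le_of_forall_edist_apply_le {ι : Type*} {E : ι → Type*}
    [∀ i, NormedAddCommGroup (E i)] {f g : lp E ∞} {c : ℝ≥0∞}
    (h : ∀ i, edist (f i) (g i) ≤ c) : edist f g ≤ c := by
  rcases eq_or_ne c ∞ with rfl | hc
  · exact le_top
  rw [edist_dist, dist_eq_norm]
  refine ofReal_le_of_le_toReal (lp.norm_le_of_forall_le toReal_nonneg fun i => ?_)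
  rw [lp.coeFn_sub, Pi.sub_apply, ← dist_eq_norm]
  exact (ofReal_le_iff_le_toReal hc).1 ((edist_dist _ _).symm.trans_le (h i))

theorem derivWithin_Icc_ae_eq_deriv {E : Type*} [NormedAddCommGroup E] [NormedSpace ℝ E]
    (f : ℝ → E) (a b : ℝ) : derivWithin f (Icc a b) =ᵐ[volume.restrict (Icc a b)] deriv f := by
  rw [← Measure.restrict_congr_set Ioo_ae_eq_Icc]
  filter_upwards [ae_restrict_mem measurableSet_Ioo] with t ht
  exact derivWithin_of_mem_nhds (Icc_mem_nhds ht.1 ht.2)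

theorem edist_le_lintegral_iSup_enorm_derivWithin {ι : Type*} {K : ℝ≥0}
    {η : ℝ → lp (fun _ : ι => ℝ) ∞} {a b : ℝ} (hη : LipschitzOnWith K η (Icc a b))
    {x y : ℝ} (hx : x ∈ Icc a b) (hy : y ∈ Icc a b) (hxy : x ≤ y) :
    edist (η x) (η y) ≤ ∫⁻ t in Ioc x y, ⨆ i, ‖derivWithin (fun s => η s i) (Icc a b) t‖ₑ := by
  refine lp.edist_le_of_forall_edist_apply_le fun i => ?_
  have hηi : LipschitzOnWith K (fun s => η s i) (uIcc x y) :=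
    ((LipschitzOnWith.coordinate _ _ _).1 hη i).mono (uIcc_subset_Icc hx hy)
  have hsub : Ioc x y ⊆ Icc a b := Ioc_subset_Icc_self.trans (Icc_subset_Icc hx.1 hy.2)
  calc edist (η x i) (η y i) = ‖η y i - η x i‖ₑ := by rw [edist_comm, edist_eq_enorm_sub]
    _ ≤ ∫⁻ t in Ioc x y, ‖deriv (fun s => η s i) t‖ₑ :=
      hηi.absolutelyContinuousOnInterval.enorm_sub_le_lintegral_deriv hxy
    _ = ∫⁻ t in Ioc x y, ‖derivWithin (fun s => η s i) (Icc a b) t‖ₑ := by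
      refine lintegral_congr_ae ?_
      filter_upwards [ae_restrict_of_ae_restrict_of_subset hsub
        (derivWithin_Icc_ae_eq_deriv (fun s => η s i) a b)] with t ht
      rw [ht]
    _ ≤ _ := lintegral_mono fun t =>
      le_iSup (fun j => ‖derivWithin (fun s => η s j) (Icc a b) t‖ₑ) i

theorem length_le_integral_sup_deriv_general
    (a b : ℝ) (K : ℝ≥0) (η : ℝ → lInfty)
    (hη : LipschitzOnWith K η (Set.Icc a b)) :
    (∀ i : ℕ, ∀ᵐ t ∂(volume.restrict (Set.Icc a b)),
      DifferentiableWithinAt ℝ (fun s => (η s : ℕ → ℝ) i) (Set.Icc a b) t) ∧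
    eVariationOn η (Set.Icc a b) ≤
      ∫⁻ t in Set.Icc a b, ⨆ i : ℕ,
        (‖derivWithin (fun s => (η s : ℕ → ℝ) i) (Set.Icc a b) t‖₊ : ℝ≥0∞) := by
  refine ⟨fun i => ((LipschitzOnWith.coordinate _ _ _).1 hη i).ae_differentiableWithinAt_real
    measurableSet_Icc, ?_⟩
  set D : ℝ → ℝ≥0∞ := fun t => ⨆ i, ‖derivWithin (fun s => η s i) (Icc a b) t‖ₑ
  calc eVariationOn η (Icc a b) ≤ volume.withDensity D (Icc a b) :=
        eVariationOn_le_measure_of_edist_le ordConnected_Icc _ fun x hx y hy hxy => by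
          rw [withDensity_apply _ measurableSet_Ioc]
          exact edist_le_lintegral_iSup_enorm_derivWithin hη hx hy hxy
    _ = ∫⁻ t in Icc a b, D t := withDensity_apply _ measurableSet_Icc

/-- **Length bound for Lipschitz curves in `ℓ∞`.** If `η = (η₁, η₂, …) : [a,b] → ℓ∞` is
Lipschitz, then each component `ηᵢ` is differentiable almost everywhere on `[a,b]`, and the
length of `η` (its total variation on `[a,b]`) is bounded by `∫_a^b ‖η'(t)‖_∞ dt`, where
`‖η'(t)‖_∞ = supᵢ |ηᵢ'(t)|`. -/
theorem length_le_integral_sup_deriv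
    (a b : ℝ) (hab : a ≤ b) (K : ℝ≥0) (η : ℝ → lInfty)
    (hη : LipschitzOnWith K η (Set.Icc a b)) :
    (∀ i : ℕ, ∀ᵐ t ∂(volume.restrict (Set.Icc a b)),
      DifferentiableWithinAt ℝ (fun s => (η s : ℕ → ℝ) i) (Set.Icc a b) t) ∧
    eVariationOn η (Set.Icc a b) ≤
      ∫⁻ t in Set.Icc a b, ⨆ i : ℕ,
        (‖derivWithin (fun s => (η s : ℕ → ℝ) i) (Set.Icc a b) t‖₊ : ℝ≥0∞) :=
  length_le_integral_sup_deriv_general a b K η hη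
end
end

section
/- Let (X, d) be a complete metric space that is quasiconvex with constant C_q, let F ⊂ [a,b] be a closed subset containing a and b, and let h : F → X be an L-Lipschitz map. Then h extends to a C_q L-Lipschitz curve Γ : [a,b] → X with Γ = h on F. -/
open MeasureTheory Set ENNReal NNReal

noncomputable section

/-!
Fill every gap `(c, d)` of `F` with a quasiconvex curve from `h c` to `h d`, reparametrized by
arc length and run at speed `C_q L`: its length is at most `C_q d(h c, h d) ≤ C_q L (d - c)`, so
it reaches `h d` by time `d` and is `C_q L`-Lipschitz on `[c, d]`. For `x ≤ y` in different gaps,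
pass through the last point of `F` before `y` and the first one after `x`: the two partial gap
segments cost at most `C_q L` per unit of time and the part in `F` costs only `L`.
-/

theorem LipschitzOnWith.of_dist_le_mul_sub {X : Type*} [PseudoMetricSpace X] {f : ℝ → X}
    {s : Set ℝ} {K : ℝ≥0} (hf : ∀ x ∈ s, ∀ y ∈ s, x ≤ y → dist (f x) (f y) ≤ K * (y - x)) :
    LipschitzOnWith K f s := by
  refine LipschitzOnWith.of_dist_le_mul fun x hx y hy => ?_
  rcases le_total x y with hxy | hyx
  · rw [Real.dist_eq, abs_of_nonpos (sub_nonpos.2 hxy), neg_sub]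
    exact hf x hx y hy hxy
  · rw [dist_comm, Real.dist_eq, abs_of_nonneg (sub_nonneg.2 hyx)]
    exact hf y hy x hx hyx

theorem HasConstantSpeedOnWith.lipschitzOnWith {E : Type*} [PseudoMetricSpace E] {f : ℝ → E}
    {s : Set ℝ} {l : ℝ≥0} (hf : HasConstantSpeedOnWith f s l) : LipschitzOnWith l f s :=
  LipschitzOnWith.of_dist_le_mul_sub fun x hx y hy hxy => by
    have hle := eVariationOn.edist_le f (s := s ∩ Icc x y) ⟨hx, le_rfl, hxy⟩ ⟨hy, hxy, le_rfl⟩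
    rw [hf hx hy] at hle
    rw [dist_edist]
    exact toReal_le_of_le_ofReal (mul_nonneg l.2 (sub_nonneg.2 hxy)) hle

theorem LocallyBoundedVariationOn.continuousOn_variationOnFromTo {α E : Type*} [LinearOrder α]
    [TopologicalSpace α] [OrderTopology α] [PseudoMetricSpace E] {f : α → E} {s : Set α}
    (hf : LocallyBoundedVariationOn f s) (hc : ContinuousOn f s) {a : α} (ha : a ∈ s) :
    ContinuousOn (variationOnFromTo f s a) s := by
  intro b hb
  have hs : s ⊆ (s ∩ Iio b ∪ {b}) ∪ s ∩ Ioi b := fun x hx => by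
    rcases lt_trichotomy x b with h | rfl | h
    exacts [Or.inl (Or.inl ⟨hx, h⟩), Or.inl (Or.inr rfl), Or.inr ⟨hx, h⟩]
  have hleft : ContinuousWithinAt (variationOnFromTo f s a) (s ∩ Iio b) b := by
    simpa [ContinuousWithinAt] using
      variationOnFromTo.tendsto_left ha hb hf ((hc b hb).mono inter_subset_left)
  have hright : ContinuousWithinAt (variationOnFromTo f s a) (s ∩ Ioi b) b := by
    simpa [ContinuousWithinAt] using
      variationOnFromTo.tendsto_right ha hb hf ((hc b hb).mono inter_subset_left)
  exact ((hleft.union continuousWithinAt_singleton).union hright).mono hs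

theorem ContinuousOn.exists_lipschitzOnWith_one_Icc_eVariationOn {E : Type*} [MetricSpace E]
    {γ : ℝ → E} {a b : ℝ} (hab : a ≤ b) (hc : ContinuousOn γ (Icc a b))
    (hγ : BoundedVariationOn γ (Icc a b)) :
    ∃ g : ℝ → E, LipschitzOnWith 1 g (Icc 0 (eVariationOn γ (Icc a b)).toReal) ∧
      g 0 = γ a ∧ g (eVariationOn γ (Icc a b)).toReal = γ b := by
  have hf := hγ.locallyBoundedVariationOn
  have ha : a ∈ Icc a b := left_mem_Icc.2 hab
  have hb : b ∈ Icc a b := right_mem_Icc.2 hab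
  have hva : variationOnFromTo γ (Icc a b) a a = 0 := variationOnFromTo.self _ _ a
  have hvb : variationOnFromTo γ (Icc a b) a b = (eVariationOn γ (Icc a b)).toReal := by
    rw [variationOnFromTo.eq_of_le _ _ hab, inter_self]
  have himage :
      Icc 0 (eVariationOn γ (Icc a b)).toReal ⊆ variationOnFromTo γ (Icc a b) a '' Icc a b := by
    simpa only [hva, hvb] using intermediate_value_Icc hab (hf.continuousOn_variationOnFromTo hc ha)
  refine ⟨naturalParameterization γ (Icc a b) a,
    ((has_unit_speed_naturalParameterization γ hf ha).lipschitzOnWith).mono himage, ?_, ?_⟩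
  · rw [← hva]
    exact edist_eq_zero.1 (edist_naturalParameterization_eq_zero hf ha ha)
  · rw [← hvb]
    exact edist_eq_zero.1 (edist_naturalParameterization_eq_zero hf ha hb)

theorem IsQuasiconvexWith.exists_lipschitzOnWith_Icc {X : Type*} [MetricSpace X] {C : ℝ≥0}
    (hX : IsQuasiconvexWith X C) (p q : X) {c d : ℝ} (hcd : c ≤ d) {K : ℝ≥0}
    (hK : C * edist p q ≤ K * edist c d) :
    ∃ g : ℝ → X, LipschitzOnWith K g (Icc c d) ∧ g c = p ∧ g d = q := by
  obtain ⟨γ, hγc, rfl, rfl, hγV⟩ := hX p q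
  have hVK : eVariationOn γ (Icc 0 1) ≤ K * edist c d := hγV.trans hK
  have hVfin : eVariationOn γ (Icc 0 1) ≠ ⊤ := ne_top_of_le_ne_top (by finiteness) hVK
  obtain ⟨g, hg, hg0, hgV⟩ := hγc.exists_lipschitzOnWith_one_Icc_eVariationOn zero_le_one hVfin
  set V := (eVariationOn γ (Icc 0 1)).toReal
  have hV : 0 ≤ V := toReal_nonneg
  have hVle : V ≤ K * (d - c) := by
    refine toReal_le_of_le_ofReal (by positivity) (hVK.trans_eq ?_)
    rw [edist_dist, Real.dist_eq, abs_of_nonpos (by linarith), neg_sub,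
      ENNReal.ofReal_mul K.coe_nonneg, ofReal_coe_nnreal]
  set φ : ℝ → ℝ := fun t => min (K * (t - c)) V
  have hφ : LipschitzWith K φ := by
    refine LipschitzWith.min_const (LipschitzWith.of_dist_le_mul fun s t => ?_) V
    rw [Real.dist_eq, Real.dist_eq, ← mul_sub, sub_sub_sub_cancel_right, abs_mul, NNReal.abs_eq]
  have hmaps : MapsTo φ (Icc c d) (Icc 0 V) := fun t ht =>
    ⟨le_min (mul_nonneg K.2 (sub_nonneg.2 ht.1)) hV, min_le_right _ _⟩
  refine ⟨g ∘ φ, by simpa using hg.comp hφ.lipschitzOnWith hmaps, ?_, ?_⟩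
  · simp [φ, hV, hg0]
  · simp [φ, hVle, hgV]

section Gaps

variable {F : Set ℝ} {x y z : ℝ}

/-- For closed `F` meeting both `Iic x` and `Ici x`, the point `x` lies in the closed gap
`[gapLeft F x, gapRight F x]` of `F`, which is degenerate when `x ∈ F`. -/
def gapLeft (F : Set ℝ) (x : ℝ) : ℝ := sSup (F ∩ Iic x)

def gapRight (F : Set ℝ) (x : ℝ) : ℝ := sInf (F ∩ Ici x)

theorem bddAbove_inter_Iic : BddAbove (F ∩ Iic x) := ⟨x, fun _ hz => hz.2⟩

theorem bddBelow_inter_Ici : BddBelow (F ∩ Ici x) := ⟨x, fun _ hz => hz.2⟩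

theorem gapLeft_mem (hF : IsClosed F) (hx : (F ∩ Iic x).Nonempty) : gapLeft F x ∈ F :=
  ((hF.inter isClosed_Iic).csSup_mem hx bddAbove_inter_Iic).1

theorem gapRight_mem (hF : IsClosed F) (hx : (F ∩ Ici x).Nonempty) : gapRight F x ∈ F :=
  ((hF.inter isClosed_Ici).csInf_mem hx bddBelow_inter_Ici).1

theorem gapLeft_le (hx : (F ∩ Iic x).Nonempty) : gapLeft F x ≤ x :=
  csSup_le hx fun _ hz => hz.2

theorem le_gapRight (hx : (F ∩ Ici x).Nonempty) : x ≤ gapRight F x :=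
  le_csInf hx fun _ hz => hz.2

theorem le_gapLeft (hz : z ∈ F) (hzx : z ≤ x) : z ≤ gapLeft F x :=
  le_csSup bddAbove_inter_Iic ⟨hz, hzx⟩

theorem gapRight_le (hz : z ∈ F) (hxz : x ≤ z) : gapRight F x ≤ z :=
  csInf_le bddBelow_inter_Ici ⟨hz, hxz⟩

theorem gapLeft_eq_self (hx : x ∈ F) : gapLeft F x = x :=
  le_antisymm (gapLeft_le ⟨x, hx, self_mem_Iic⟩) (le_gapLeft hx le_rfl)

theorem gapRight_eq_self (hx : x ∈ F) : gapRight F x = x :=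
  le_antisymm (gapRight_le hx le_rfl) (le_gapRight ⟨x, hx, self_mem_Ici⟩)

theorem gapLeft_eq_of_lt_gapRight (hxy : x ≤ y) (hy : y < gapRight F x) :
    gapLeft F y = gapLeft F x := by
  refine congrArg sSup (Set.ext fun z => ⟨fun hz => ⟨hz.1, ?_⟩, fun hz => ⟨hz.1, hz.2.trans hxy⟩⟩)
  refine mem_Iic.2 (le_of_not_gt fun hxz => ?_)
  exact (gapRight_le hz.1 hxz.le).not_gt (hz.2.trans_lt hy)

theorem gapRight_eq_of_lt_gapRight (hxy : x ≤ y) (hy : y < gapRight F x) :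
    gapRight F y = gapRight F x := by
  refine congrArg sInf (Set.ext fun z => ⟨fun hz => ⟨hz.1, hxy.trans hz.2⟩, fun hz => ⟨hz.1, ?_⟩⟩)
  exact hy.le.trans (gapRight_le hz.1 hz.2)

end Gaps

section FillGaps

variable {X : Type*} [PseudoMetricSpace X] {F : Set ℝ} {a b x y : ℝ} {h : ℝ → X}
  {g : ℝ → ℝ → ℝ → X} {K L : ℝ≥0}

def IsGapFiller (F : Set ℝ) (h : ℝ → X) (K : ℝ≥0) (g : ℝ → ℝ → ℝ → X) : Prop :=
  ∀ c ∈ F, ∀ d ∈ F, c ≤ d → LipschitzOnWith K (g c d) (Icc c d) ∧ g c d c = h c ∧ g c d d = h d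

def fillGaps (F : Set ℝ) (g : ℝ → ℝ → ℝ → X) (x : ℝ) : X := g (gapLeft F x) (gapRight F x) x

theorem fillGaps_eq_of_mem (hg : IsGapFiller F h K g) (hx : x ∈ F) : fillGaps F g x = h x := by
  rw [fillGaps, gapLeft_eq_self hx, gapRight_eq_self hx]
  exact (hg x hx x hx le_rfl).2.1

theorem dist_fillGaps_gapLeft_le (hF : IsClosed F) (hg : IsGapFiller F h K g)
    (hxl : (F ∩ Iic x).Nonempty) (hxr : (F ∩ Ici x).Nonempty) :
    dist (fillGaps F g x) (h (gapLeft F x)) ≤ K * (x - gapLeft F x) := by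
  have hcx := gapLeft_le hxl
  have hxd := le_gapRight hxr
  obtain ⟨hlip, hc, -⟩ := hg _ (gapLeft_mem hF hxl) _ (gapRight_mem hF hxr) (hcx.trans hxd)
  rw [fillGaps, ← hc]
  calc _ ≤ K * dist x (gapLeft F x) := hlip.dist_le_mul x ⟨hcx, hxd⟩ _ ⟨le_rfl, hcx.trans hxd⟩
    _ = K * (x - gapLeft F x) := by rw [Real.dist_eq, abs_of_nonneg (sub_nonneg.2 hcx)]

theorem dist_fillGaps_gapRight_le (hF : IsClosed F) (hg : IsGapFiller F h K g)
    (hxl : (F ∩ Iic x).Nonempty) (hxr : (F ∩ Ici x).Nonempty) :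
    dist (fillGaps F g x) (h (gapRight F x)) ≤ K * (gapRight F x - x) := by
  have hcx := gapLeft_le hxl
  have hxd := le_gapRight hxr
  obtain ⟨hlip, -, hd⟩ := hg _ (gapLeft_mem hF hxl) _ (gapRight_mem hF hxr) (hcx.trans hxd)
  rw [fillGaps, ← hd]
  calc _ ≤ K * dist x (gapRight F x) := hlip.dist_le_mul x ⟨hcx, hxd⟩ _ ⟨hcx.trans hxd, le_rfl⟩
    _ = K * (gapRight F x - x) := by
      rw [Real.dist_eq, abs_of_nonpos (sub_nonpos.2 hxd), neg_sub]

theorem dist_fillGaps_le_of_le (hF : IsClosed F) (hg : IsGapFiller F h K g)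
    (hh : LipschitzOnWith L h F) (hLK : L ≤ K) (ha : a ∈ F) (hb : b ∈ F) (hx : x ∈ Icc a b)
    (hy : y ∈ Icc a b) (hxy : x ≤ y) :
    dist (fillGaps F g x) (fillGaps F g y) ≤ K * (y - x) := by
  have hl : ∀ {t}, t ∈ Icc a b → (F ∩ Iic t).Nonempty := fun ht => ⟨a, ha, ht.1⟩
  have hr : ∀ {t}, t ∈ Icc a b → (F ∩ Ici t).Nonempty := fun ht => ⟨b, hb, ht.2⟩
  rcases le_or_gt (gapRight F x) y with hsep | hsame
  · set d := gapRight F x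
    set c := gapLeft F y
    have hdF : d ∈ F := gapRight_mem hF (hr hx)
    have hdc : d ≤ c := le_gapLeft hdF hsep
    have hhdc : dist (h d) (h c) ≤ L * (c - d) := by
      have := hh.dist_le_mul d hdF c (gapLeft_mem hF (hl hy))
      rwa [Real.dist_eq, abs_of_nonpos (sub_nonpos.2 hdc), neg_sub] at this
    calc dist (fillGaps F g x) (fillGaps F g y)
        ≤ dist (fillGaps F g x) (h d) + dist (h d) (h c) + dist (h c) (fillGaps F g y) :=
          dist_triangle4 _ _ _ _
      _ ≤ K * (d - x) + L * (c - d) + K * (y - c) := by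
          gcongr
          · exact dist_fillGaps_gapRight_le hF hg (hl hx) (hr hx)
          · rw [dist_comm]
            exact dist_fillGaps_gapLeft_le hF hg (hl hy) (hr hy)
      _ ≤ K * (d - x) + K * (c - d) + K * (y - c) := by
          gcongr
      _ = K * (y - x) := by ring
  · obtain ⟨hlip, -, -⟩ := hg _ (gapLeft_mem hF (hl hx)) _ (gapRight_mem hF (hr hx))
      ((gapLeft_le (hl hx)).trans (le_gapRight (hr hx)))
    rw [fillGaps, fillGaps, gapLeft_eq_of_lt_gapRight hxy hsame,
      gapRight_eq_of_lt_gapRight hxy hsame]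
    calc _ ≤ K * dist x y := hlip.dist_le_mul x ⟨gapLeft_le (hl hx), le_gapRight (hr hx)⟩
          y ⟨(gapLeft_le (hl hx)).trans hxy, hsame.le⟩
      _ = K * (y - x) := by rw [Real.dist_eq, abs_of_nonpos (sub_nonpos.2 hxy), neg_sub]

theorem lipschitzOnWith_fillGaps (hF : IsClosed F) (hg : IsGapFiller F h K g)
    (hh : LipschitzOnWith L h F) (hLK : L ≤ K) (ha : a ∈ F) (hb : b ∈ F) :
    LipschitzOnWith K (fillGaps F g) (Icc a b) :=
  LipschitzOnWith.of_dist_le_mul_sub fun _ hx _ hy hxy =>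
    dist_fillGaps_le_of_le hF hg hh hLK ha hb hx hy hxy

end FillGaps

theorem exists_lipschitz_extension_of_quasiconvex_general
    {X : Type*} [MetricSpace X]
    (Cq : ℝ≥0) (hCq : 1 ≤ Cq) (hX : IsQuasiconvexWith X Cq)
    (a b : ℝ) (F : Set ℝ) (hFclosed : IsClosed F)
    (haF : a ∈ F) (hbF : b ∈ F)
    (L : ℝ≥0) (h : ℝ → X) (hh : LipschitzOnWith L h F) :
    ∃ Γ : ℝ → X, LipschitzOnWith (Cq * L) Γ (Set.Icc a b) ∧ Set.EqOn Γ h F := by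
  have hgaps : ∀ c ∈ F, ∀ d ∈ F, c ≤ d →
      ∃ γ : ℝ → X, LipschitzOnWith (Cq * L) γ (Icc c d) ∧ γ c = h c ∧ γ d = h d :=
    fun c hc d hd hcd => hX.exists_lipschitzOnWith_Icc (h c) (h d) hcd <|
      calc (Cq : ℝ≥0∞) * edist (h c) (h d) ≤ Cq * (L * edist c d) := by gcongr; exact hh hc hd
        _ = ↑(Cq * L) * edist c d := by push_cast; ring
  have : Nonempty X := ⟨h a⟩
  choose! g hg using hgaps
  exact ⟨fillGaps F g, lipschitzOnWith_fillGaps hFclosed hg hh (le_mul_of_one_le_left L.2 hCq)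
    haF hbF, fun x hx => fillGaps_eq_of_mem hg hx⟩

/-- **Lipschitz extension along an interval.** If `X` is complete and quasiconvex with constant
`C_q`, `F ⊆ [a,b]` is closed and contains `a` and `b`, and `h : F → X` is `L`-Lipschitz, then `h`
extends to a `C_q L`-Lipschitz curve `Γ : [a,b] → X` with `Γ = h` on `F`. -/
theorem exists_lipschitz_extension_of_quasiconvex
    {X : Type*} [MetricSpace X] [CompleteSpace X]
    (Cq : ℝ≥0) (hCq : 1 ≤ Cq) (hX : IsQuasiconvexWith X Cq)
    (a b : ℝ) (hab : a ≤ b) (F : Set ℝ) (hFclosed : IsClosed F) (hFsub : F ⊆ Set.Icc a b)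
    (haF : a ∈ F) (hbF : b ∈ F)
    (L : ℝ≥0) (h : ℝ → X) (hh : LipschitzOnWith L h F) :
    ∃ Γ : ℝ → X, LipschitzOnWith (Cq * L) Γ (Set.Icc a b) ∧ Set.EqOn Γ h F :=
  exists_lipschitz_extension_of_quasiconvex_general Cq hCq hX a b F hFclosed haF hbF L h hh
end
end

section
/- Let n > m be positive integers. There is no mapping Φ : ℝ^n → ℝ^m such that ℓ(Φ∘γ) = ℓ(γ) for every rectifiable curve γ in ℝ^n; that is, there is no curve-length preserving mapping from ℝ^n into ℝ^m when m < n. -/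
/-!
A curve-length preserving map `Φ` is `1`-Lipschitz (compare a segment with its image), hence
differentiable almost everywhere by Rademacher's theorem. Along a line `t ↦ x + t • v` it gives a
Lipschitz curve whose length on every interval is `‖v‖` times the length of the interval; as that
length is at most the integral of the speed, and the speed is at most `‖v‖`, the speed is `‖v‖`
almost everywhere. Integrating over the lines parallel to `v`, for `v` in a countable dense set,
shows that at almost every point the derivative of `Φ` is a linear isometry, which is impossible
from `ℝⁿ` into `ℝᵐ` when `m < n`.
-/

open MeasureTheory Set ENNReal NNReal

theorem eVariationOn_le_of_edist_le {α E E' : Type*} [LinearOrder α] [PseudoEMetricSpace E]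
    [PseudoEMetricSpace E'] {f : α → E} {g : α → E'} {s : Set α}
    (h : ∀ x ∈ s, ∀ y ∈ s, x ≤ y → edist (f x) (f y) ≤ edist (g x) (g y)) :
    eVariationOn f s ≤ eVariationOn g s :=
  iSup_le fun ⟨_, u, hu, hus⟩ ↦ (Finset.sum_le_sum fun i _ ↦ by
    rw [edist_comm, edist_comm (g _)]
    exact h _ (hus i) _ (hus (i + 1)) (hu i.le_succ)).trans (eVariationOn.sum_le hu hus)

theorem LipschitzWith.eVariationOn_Icc_le {E : Type*} [PseudoEMetricSpace E] {K : ℝ≥0}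
    {f : ℝ → E} (hf : LipschitzWith K f) (a b : ℝ) :
    eVariationOn f (Icc a b) ≤ K * ENNReal.ofReal (b - a) := by
  have := (hf.lipschitzOnWith (s := univ)).comp_eVariationOn_le (g := id) (s := Icc a b)
    (mapsTo_univ _ _)
  rw [Function.comp_id, ← univ_inter (Icc a b),
    monotoneOn_id.eVariationOn_eq (mem_univ a) (mem_univ b)] at this
  simpa only [univ_inter, id] using this

section Line

variable {E : Type*} [NormedAddCommGroup E] [NormedSpace ℝ E]

theorem lipschitzWith_add_smul (x v : E) : LipschitzWith ‖v‖₊ fun t : ℝ ↦ x + t • v :=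
  LipschitzWith.of_dist_le_mul fun s t ↦ by
    rw [dist_add_left, dist_eq_norm, ← sub_smul, norm_smul, mul_comm, Real.dist_eq,
      Real.norm_eq_abs, coe_nnnorm]

theorem eVariationOn_add_smul_Icc (x v : E) {a b : ℝ} (hab : a ≤ b) :
    eVariationOn (fun t : ℝ ↦ x + t • v) (Icc a b) = ‖v‖₊ * ENNReal.ofReal (b - a) := by
  refine le_antisymm ((lipschitzWith_add_smul x v).eVariationOn_Icc_le a b) ?_
  calc (‖v‖₊ : ℝ≥0∞) * ENNReal.ofReal (b - a) = edist (x + a • v) (x + b • v) := by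
        rw [edist_add_left, edist_comm, edist_eq_enorm_sub, ← sub_smul, enorm_smul,
          Real.enorm_of_nonneg (sub_nonneg.2 hab), mul_comm, enorm_eq_nnnorm]
    _ ≤ _ := eVariationOn.edist_le (fun t : ℝ ↦ x + t • v) (left_mem_Icc.2 hab)
      (right_mem_Icc.2 hab)

end Line

section Speed

variable {F : Type*} [NormedAddCommGroup F] [NormedSpace ℝ F] [FiniteDimensional ℝ F]
  {K : ℝ≥0} {g : ℝ → F}

theorem LipschitzWith.intervalIntegrable_norm_deriv (hg : LipschitzWith K g) (a b : ℝ) :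
    IntervalIntegrable (fun t ↦ ‖deriv g t‖) volume a b :=
  (intervalIntegrable_const (c := (K : ℝ))).mono_fun'
    (aestronglyMeasurable_deriv g _).norm
    (Filter.Eventually.of_forall fun _ ↦ by
      simpa only [norm_norm] using norm_deriv_le_of_lipschitz hg)

theorem LipschitzWith.norm_sub_le_integral_norm_deriv (hg : LipschitzWith K g) {c d : ℝ}
    (hcd : c ≤ d) : ‖g d - g c‖ ≤ ∫ t in c..d, ‖deriv g t‖ := by
  -- The fundamental theorem of calculus is available for real-valued absolutely continuous
  -- functions, so test the chord against a norming functional.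
  obtain ⟨φ, hφ_norm, hφ⟩ := exists_dual_vector'' ℝ (g d - g c)
  have hφg : LipschitzWith (‖φ‖₊ * K) (φ ∘ g) := φ.lipschitz.comp hg
  have hac := (hφg.lipschitzOnWith (s := uIcc c d)).absolutelyContinuousOnInterval
  have hderiv : deriv (φ ∘ g) ≤ᵐ[volume] fun t ↦ ‖deriv g t‖ := by
    filter_upwards [hg.ae_differentiableAt_real] with t ht
    rw [(φ.hasFDerivAt.comp_hasDerivAt t ht.hasDerivAt).deriv]
    exact (le_abs_self _).trans (φ.le_of_opNorm_le hφ_norm _ |>.trans_eq (one_mul _))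
  calc ‖g d - g c‖ = (φ ∘ g) d - (φ ∘ g) c := by
        simp only [Function.comp_apply, ← map_sub, hφ, RCLike.ofReal_real_eq_id, id]
    _ = ∫ t in c..d, deriv (φ ∘ g) t := hac.integral_deriv_eq_sub.symm
    _ ≤ ∫ t in c..d, ‖deriv g t‖ :=
        intervalIntegral.integral_mono_ae hcd hac.intervalIntegrable_deriv
          (hg.intervalIntegrable_norm_deriv c d) hderiv

theorem LipschitzWith.eVariationOn_Icc_le_integral_norm_deriv (hg : LipschitzWith K g) (a b : ℝ) :
    eVariationOn g (Icc a b) ≤ ENNReal.ofReal (∫ t in a..b, ‖deriv g t‖) := by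
  set G : ℝ → ℝ := fun x ↦ ∫ t in a..x, ‖deriv g t‖
  have hG : ∀ x y, G y - G x = ∫ t in x..y, ‖deriv g t‖ := fun x y ↦
    intervalIntegral.integral_interval_sub_left (hg.intervalIntegrable_norm_deriv _ _)
      (hg.intervalIntegrable_norm_deriv _ _)
  have hG_mono : Monotone G := fun x y hxy ↦ sub_nonneg.1 <|
    hG x y ▸ intervalIntegral.integral_nonneg hxy fun _ _ ↦ norm_nonneg _
  calc eVariationOn g (Icc a b) ≤ eVariationOn G (Icc a b) :=
        eVariationOn_le_of_edist_le fun x _ y _ hxy ↦ by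
          rw [edist_comm (g x), edist_comm (G x), edist_dist, edist_dist, dist_eq_norm,
            Real.dist_eq, abs_of_nonneg (sub_nonneg.2 (hG_mono hxy)), hG]
          exact ENNReal.ofReal_le_ofReal (hg.norm_sub_le_integral_norm_deriv hxy)
    _ = ENNReal.ofReal (G b - G a) := by
        rw [← univ_inter (Icc a b), (hG_mono.monotoneOn univ).eVariationOn_eq (mem_univ a)
          (mem_univ b)]
    _ = ENNReal.ofReal (∫ t in a..b, ‖deriv g t‖) := by simp [G]

theorem LipschitzWith.ae_restrict_norm_deriv_eq (hg : LipschitzWith K g) {a b : ℝ} (hab : a ≤ b)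
    (hvar : ENNReal.ofReal (K * (b - a)) ≤ eVariationOn g (Icc a b)) :
    ∀ᵐ t ∂volume.restrict (Ioc a b), ‖deriv g t‖ = K := by
  have hbound : ∀ t, ‖deriv g t‖ ≤ K := fun t ↦ norm_deriv_le_of_lipschitz hg
  have hint : ∫ t in a..b, ((K : ℝ) - ‖deriv g t‖) = 0 := by
    refine le_antisymm ?_ (intervalIntegral.integral_nonneg hab fun t _ ↦ sub_nonneg.2 (hbound t))
    have hlen := (ENNReal.ofReal_le_ofReal_iff (intervalIntegral.integral_nonneg hab
      fun _ _ ↦ norm_nonneg _)).1 (hvar.trans (hg.eVariationOn_Icc_le_integral_norm_deriv a b))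
    rw [intervalIntegral.integral_sub intervalIntegrable_const
      (hg.intervalIntegrable_norm_deriv a b), intervalIntegral.integral_const, smul_eq_mul]
    linarith
  rw [intervalIntegral.integral_eq_zero_iff_of_nonneg_ae
    (Filter.Eventually.of_forall fun t ↦ sub_nonneg.2 (hbound t))
    (intervalIntegrable_const.sub (hg.intervalIntegrable_norm_deriv a b)),
    Ioc_eq_empty (not_lt.2 hab), union_empty] at hint
  filter_upwards [hint] with t ht
  exact (sub_eq_zero.1 ht).symm

theorem LipschitzWith.ae_norm_deriv_eq (hg : LipschitzWith K g)
    (hvar : ∀ a b, a ≤ b → ENNReal.ofReal (K * (b - a)) ≤ eVariationOn g (Icc a b)) :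
    ∀ᵐ t, ‖deriv g t‖ = K := by
  have hN : ∀ N : ℕ, ∀ᵐ t, t ∈ Ioc (-(N : ℝ)) N → ‖deriv g t‖ = K := fun N ↦
    (ae_restrict_iff' measurableSet_Ioc).1 <| hg.ae_restrict_norm_deriv_eq
      (neg_le_self N.cast_nonneg) (hvar _ _ (neg_le_self N.cast_nonneg))
  filter_upwards [ae_all_iff.2 hN] with t ht
  obtain ⟨N, hN⟩ := exists_nat_gt |t|
  exact ht N ⟨by linarith [neg_abs_le t], by linarith [le_abs_self t]⟩

end Speed

def IsCurveLengthPreserving {E F : Type*} [PseudoEMetricSpace E] [PseudoEMetricSpace F]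
    (Φ : E → F) : Prop :=
  ∀ (a b : ℝ) (γ : ℝ → E), ContinuousOn γ (Icc a b) → eVariationOn γ (Icc a b) ≠ ⊤ →
    eVariationOn (Φ ∘ γ) (Icc a b) = eVariationOn γ (Icc a b)

namespace IsCurveLengthPreserving

variable {E F : Type*} [NormedAddCommGroup E] [NormedSpace ℝ E]

section PseudoEMetric

variable [PseudoEMetricSpace F] {Φ : E → F} (hΦ : IsCurveLengthPreserving Φ)
include hΦ

theorem eVariationOn_comp_add_smul (x v : E) (a b : ℝ) :
    eVariationOn (fun t ↦ Φ (x + t • v)) (Icc a b) =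
      eVariationOn (fun t : ℝ ↦ x + t • v) (Icc a b) :=
  hΦ a b _ (lipschitzWith_add_smul x v).continuous.continuousOn <|
    ne_top_of_le_ne_top (mul_ne_top coe_ne_top ofReal_ne_top)
      ((lipschitzWith_add_smul x v).eVariationOn_Icc_le a b)

theorem lipschitzWith : LipschitzWith 1 Φ := by
  refine LipschitzWith.of_edist_le fun x y ↦ ?_
  calc edist (Φ x) (Φ y) = edist (Φ (x + (0 : ℝ) • (y - x))) (Φ (x + (1 : ℝ) • (y - x))) := by
        simp
    _ ≤ eVariationOn (fun t ↦ Φ (x + t • (y - x))) (Icc 0 1) :=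
        eVariationOn.edist_le (fun t ↦ Φ (x + t • (y - x))) (left_mem_Icc.2 zero_le_one)
          (right_mem_Icc.2 zero_le_one)
    _ = edist x y := by
        rw [hΦ.eVariationOn_comp_add_smul, eVariationOn_add_smul_Icc _ _ zero_le_one, sub_zero,
          ofReal_one, mul_one, edist_comm, edist_eq_enorm_sub, enorm_eq_nnnorm]

end PseudoEMetric

variable [NormedAddCommGroup F] [NormedSpace ℝ F] {Φ : E → F} (hΦ : IsCurveLengthPreserving Φ)
include hΦ

theorem ae_norm_lineDeriv_eq [FiniteDimensional ℝ E] [FiniteDimensional ℝ F] [MeasurableSpace E]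
    [BorelSpace E] (μ : Measure E) [μ.IsAddHaarMeasure] (v : E) :
    ∀ᵐ z ∂μ, ‖lineDeriv ℝ Φ z v‖ = ‖v‖ := by
  borelize F
  let L : ℝ →L[ℝ] E := (1 : ℝ →L[ℝ] ℝ).smulRight v
  refine ae_mem_of_ae_add_linearMap_mem L.toLinearMap volume μ
    (measurableSet_eq_fun (measurable_lineDeriv hΦ.lipschitzWith.continuous).norm
      measurable_const) fun x ↦ ?_
  have hg : LipschitzWith ‖v‖₊ fun t : ℝ ↦ Φ (x + t • v) := by
    have := hΦ.lipschitzWith.comp (lipschitzWith_add_smul x v)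
    rwa [one_mul] at this
  filter_upwards [hg.ae_norm_deriv_eq fun a b hab ↦ by
    rw [hΦ.eVariationOn_comp_add_smul, eVariationOn_add_smul_Icc x v hab,
      ofReal_mul NNReal.zero_le_coe, ofReal_coe_nnreal]] with t ht
  change ‖lineDeriv ℝ Φ (x + t • v) v‖ = ‖v‖
  simp only [lineDeriv, add_assoc, ← add_smul]
  rw [deriv_comp_const_add (fun s ↦ Φ (x + s • v)), add_zero, ht, coe_nnnorm]

theorem ae_norm_fderiv_apply_eq [FiniteDimensional ℝ E] [FiniteDimensional ℝ F]
    [MeasurableSpace E] [BorelSpace E] (μ : Measure E) [μ.IsAddHaarMeasure] :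
    ∀ᵐ z ∂μ, ∀ v, ‖fderiv ℝ Φ z v‖ = ‖v‖ := by
  obtain ⟨D, hD_count, hD_dense⟩ := TopologicalSpace.exists_countable_dense E
  filter_upwards [hΦ.lipschitzWith.ae_differentiableAt (μ := μ),
    (ae_ball_iff hD_count).2 fun v _ ↦ hΦ.ae_norm_lineDeriv_eq μ v] with z hz hzD v
  refine congrFun (Continuous.ext_on hD_dense (f := fun w ↦ ‖fderiv ℝ Φ z w‖) (g := fun w ↦ ‖w‖)
    (by fun_prop) (by fun_prop) fun w hw ↦ ?_) v
  simpa only [hz.lineDeriv_eq_fderiv] using hzD w hw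

theorem finrank_le [FiniteDimensional ℝ E] [FiniteDimensional ℝ F] :
    Module.finrank ℝ E ≤ Module.finrank ℝ F := by
  borelize E
  obtain ⟨z, hz⟩ := (hΦ.ae_norm_fderiv_apply_eq Measure.addHaar).exists
  let T : E →ₗᵢ[ℝ] F := ⟨(fderiv ℝ Φ z).toLinearMap, hz⟩
  exact LinearMap.finrank_le_finrank_of_injective T.injective

end IsCurveLengthPreserving

theorem no_length_preserving_map_general (n m : ℕ) (hmn : m < n) :
    ¬ ∃ Φ : EuclideanSpace ℝ (Fin n) → EuclideanSpace ℝ (Fin m),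
        ∀ (a b : ℝ) (γ : ℝ → EuclideanSpace ℝ (Fin n)),
          ContinuousOn γ (Set.Icc a b) → eVariationOn γ (Set.Icc a b) ≠ ⊤ →
          eVariationOn (Φ ∘ γ) (Set.Icc a b) = eVariationOn γ (Set.Icc a b) := by
  rintro ⟨Φ, hΦ⟩
  have := IsCurveLengthPreserving.finrank_le hΦ
  simp only [finrank_euclideanSpace_fin] at this
  omega

/-- **No curve-length preserving map `ℝⁿ → ℝᵐ` for `m < n`.** If `n > m` are positive integers,
there is no map `Φ : ℝⁿ → ℝᵐ` (with the Euclidean metrics) such that `ℓ(Φ ∘ γ) = ℓ(γ)` for every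
rectifiable curve `γ` in `ℝⁿ`. -/
theorem no_length_preserving_map (n m : ℕ) (hm : 0 < m) (hmn : m < n) :
    ¬ ∃ Φ : EuclideanSpace ℝ (Fin n) → EuclideanSpace ℝ (Fin m),
        ∀ (a b : ℝ) (γ : ℝ → EuclideanSpace ℝ (Fin n)),
          ContinuousOn γ (Set.Icc a b) → eVariationOn γ (Set.Icc a b) ≠ ⊤ →
          eVariationOn (Φ ∘ γ) (Set.Icc a b) = eVariationOn γ (Set.Icc a b) :=
  no_length_preserving_map_general n m hmn
end
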